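/- arXiv:2501.07915 — 8 statements merged into one kernel-verified Lean document; each statement's English description precedes it below -/
import Mathlib

section
/- Let d, N ≥ 1, let P be a positive semidefinite Nd×Nd real matrix written in d×d blocks (P_{i,j})_{1≤i,j≤N}, and let ω ∈ ℝ^N satisfy ω_i > 0 for all i and Σ_{i=1}^N ω_i = 1. Then P ⪯ blockdiag(ω₁⁻¹ P_{1,1}, …, ω_N⁻¹ P_{N,N}) in the Loewner order. -/
/-! Write `x = ∑ᵢ uᵢ` with `uᵢ` the restriction of `x` to the `i`-th block, so that
`xᵀ blockdiag(ωᵢ⁻¹ Pᵢᵢ) x = ∑ᵢ ωᵢ⁻¹ q(uᵢ)` for the quadratic form `q(v) = vᵀ P v`.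
Since `P ⪰ 0`, `q` is convex, and Jensen's inequality with the weights `ωᵢ` gives
`q(x) = q(∑ᵢ ωᵢ (ωᵢ⁻¹ uᵢ)) ≤ ∑ᵢ ωᵢ q(ωᵢ⁻¹ uᵢ) = ∑ᵢ ωᵢ⁻¹ q(uᵢ)`. -/

open Matrix

namespace Matrix

section QuadraticForm

variable {n : Type*} [Fintype n] {P : Matrix n n ℝ}

theorem PosSemidef.convexOn_dotProduct_mulVec (hP : P.PosSemidef) :
    ConvexOn ℝ Set.univ fun v : n → ℝ => v ⬝ᵥ P *ᵥ v := by
  -- `a q(x) + b q(y) - q(a x + b y) = a b q(x - y)` when `a + b = 1`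
  refine ⟨convex_univ, fun x _ y _ a b ha hb hab => ?_⟩
  have hdiff := hP.dotProduct_mulVec_nonneg (x - y)
  obtain rfl : b = 1 - a := by linarith
  simp only [star_trivial, mulVec_sub, mulVec_add, mulVec_smul, sub_dotProduct, dotProduct_sub,
    add_dotProduct, dotProduct_add, smul_dotProduct, dotProduct_smul, smul_eq_mul] at hdiff ⊢
  nlinarith [mul_nonneg (mul_nonneg ha hb) hdiff]

theorem PosSemidef.dotProduct_mulVec_sum_le (hP : P.PosSemidef) {ι : Type*} [Fintype ι]
    (u : ι → n → ℝ) (ω : ι → ℝ) (hω : ∀ i, 0 < ω i) (hsum : ∑ i, ω i = 1) :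
    (∑ i, u i) ⬝ᵥ P *ᵥ ∑ i, u i ≤ ∑ i, (ω i)⁻¹ * (u i ⬝ᵥ P *ᵥ u i) := by
  have jensen := hP.convexOn_dotProduct_mulVec.map_sum_le (t := Finset.univ)
    (p := fun i => (ω i)⁻¹ • u i) (fun i _ => (hω i).le) hsum (fun _ _ => Set.mem_univ _)
  have hsmul : ∀ i, ω i • (ω i)⁻¹ • u i = u i := fun i => by
    rw [smul_smul, mul_inv_cancel₀ (hω i).ne', one_smul]
  have hweight : ∀ i, ω i • ((ω i)⁻¹ • u i ⬝ᵥ P *ᵥ (ω i)⁻¹ • u i)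
      = (ω i)⁻¹ * (u i ⬝ᵥ P *ᵥ u i) := fun i => by
    have := (hω i).ne'
    simp only [mulVec_smul, smul_dotProduct, dotProduct_smul, smul_eq_mul]
    field_simp
  simpa only [hsmul, hweight] using jensen

end QuadraticForm

section Blocks

variable {ι κ : Type*} [DecidableEq ι]

/-- `blockdiag(c₁ P₁₁, …, c_N P_NN)`, the blocks being indexed by the first coordinate. -/
def blockDiagScale (c : ι → ℝ) (P : Matrix (ι × κ) (ι × κ) ℝ) : Matrix (ι × κ) (ι × κ) ℝ :=
  of fun p q => if p.1 = q.1 then c p.1 * P p q else 0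

def blockRestrict (i : ι) (x : ι × κ → ℝ) : ι × κ → ℝ :=
  fun p => if p.1 = i then x p else 0

theorem sum_blockRestrict [Fintype ι] (x : ι × κ → ℝ) : ∑ i, blockRestrict i x = x := by
  funext p
  simp [blockRestrict, Finset.sum_apply]

theorem IsHermitian.blockDiagScale {P : Matrix (ι × κ) (ι × κ) ℝ} (hP : P.IsHermitian)
    (c : ι → ℝ) : (blockDiagScale c P).IsHermitian := by
  ext p q
  have hpq : P q p = P p q := by simpa using congrFun (congrFun hP p) q
  by_cases h : q.1 = p.1
  · simp [Matrix.blockDiagScale, h, hpq]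
  · simp [Matrix.blockDiagScale, h, Ne.symm h]

theorem dotProduct_blockDiagScale_mulVec [Fintype ι] [Fintype κ] (c : ι → ℝ)
    (P : Matrix (ι × κ) (ι × κ) ℝ) (x : ι × κ → ℝ) :
    x ⬝ᵥ blockDiagScale c P *ᵥ x
      = ∑ i, c i * (blockRestrict i x ⬝ᵥ P *ᵥ blockRestrict i x) := by
  simp only [blockDiagScale, blockRestrict, dotProduct, mulVec, of_apply, Finset.mul_sum,
    Fintype.sum_prod_type, ite_mul, mul_ite, zero_mul, mul_zero, Finset.sum_ite_irrel,
    Finset.sum_const_zero, Finset.sum_ite_eq, Finset.sum_ite_eq', Finset.mem_univ, if_true]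
  exact Finset.sum_congr rfl fun i _ => Finset.sum_congr rfl fun a _ =>
    Finset.sum_congr rfl fun b _ => by ring

end Blocks

end Matrix

theorem ci_centralized_bound_general (d N : ℕ)
    (P : Matrix (Fin N × Fin d) (Fin N × Fin d) ℝ) (hP : P.PosSemidef)
    (ω : Fin N → ℝ) (hω : ∀ i, 0 < ω i) (hsum : ∑ i, ω i = 1) :
    (Matrix.of (fun p q : Fin N × Fin d =>
        if p.1 = q.1 then (ω p.1)⁻¹ * P p q else 0) - P).PosSemidef := by
  change (blockDiagScale ω⁻¹ P - P).PosSemidef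
  refine .of_dotProduct_mulVec_nonneg ((hP.1.blockDiagScale _).sub hP.1) fun x => ?_
  rw [star_trivial, sub_mulVec, dotProduct_sub, sub_nonneg, dotProduct_blockDiagScale_mulVec]
  calc x ⬝ᵥ P *ᵥ x = (∑ i, blockRestrict i x) ⬝ᵥ P *ᵥ ∑ i, blockRestrict i x := by
        rw [sum_blockRestrict]
    _ ≤ ∑ i, (ω i)⁻¹ * (blockRestrict i x ⬝ᵥ P *ᵥ blockRestrict i x) :=
        hP.dotProduct_mulVec_sum_le _ ω hω hsum

/-- the CI centralized bound `blockdiag(ω₁⁻¹ P₁₁, …, ω_N⁻¹ P_NN)`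
dominates any positive semidefinite block matrix `P` with those diagonal blocks,
whenever the ωᵢ are positive and sum to 1. -/
theorem ci_centralized_bound (d N : ℕ) (hd : 1 ≤ d) (hN : 1 ≤ N)
    (P : Matrix (Fin N × Fin d) (Fin N × Fin d) ℝ) (hP : P.PosSemidef)
    (ω : Fin N → ℝ) (hω : ∀ i, 0 < ω i) (hsum : ∑ i, ω i = 1) :
    (Matrix.of (fun p q : Fin N × Fin d =>
        if p.1 = q.1 then (ω p.1)⁻¹ * P p q else 0) - P).PosSemidef :=
  ci_centralized_bound_general d N P hP ω hω hsum
end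

section
/- For every ω ∈ (0,1): (i) every P ∈ 𝒜 satisfies P ⪯ Bc(ω); and (ii) the pair (K(ω), B_F(ω)) is a conservative fusion over 𝒜, i.e. K(ω) H = I_d and K(ω) P K(ω)ᵀ ⪯ B_F(ω) for every P ∈ 𝒜. -/
/-!
Part (i): for `P = Q + S` with `Q ⪰ 0` having diagonal blocks `P₁, P₂`, the congruence
`J = blockdiag((1 - ω) I, -ω I)` gives
`ω (1 - ω) (blockdiag(ω⁻¹ P₁, (1 - ω)⁻¹ P₂) - Q) = Jᵀ Q J ⪰ 0`, so `P ⪯ Bc(ω)`.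

Part (ii): `K = (Hᵀ A⁻¹ H)⁻¹ Hᵀ A⁻¹` is the generalised least-squares gain for `A = Bc(ω)`.
It satisfies `K H = I` and `K A Kᵀ = (Hᵀ A⁻¹ H)⁻¹`, hence
`(Hᵀ A⁻¹ H)⁻¹ - K P Kᵀ = K (A - P) Kᵀ ⪰ 0` for every `P ⪯ A`.
-/

open Matrix Set

noncomputable section

/-- `H = [I_d; I_d]`, the two vertically stacked `d×d` identity blocks. -/
def Hmat (d : ℕ) : Matrix (Fin d ⊕ Fin d) (Fin d) ℝ :=
  Matrix.fromRows 1 1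

/-- The admissible set `𝒜`: all matrices `P⁽¹⁾ + S` with `P⁽¹⁾` positive
semidefinite with diagonal blocks `P₁` and `P₂`. -/
def Adm (d : ℕ) (P₁ P₂ : Matrix (Fin d) (Fin d) ℝ)
    (S : Matrix (Fin d ⊕ Fin d) (Fin d ⊕ Fin d) ℝ) :
    Set (Matrix (Fin d ⊕ Fin d) (Fin d ⊕ Fin d) ℝ) :=
  {P | ∃ Q : Matrix (Fin d ⊕ Fin d) (Fin d ⊕ Fin d) ℝ,
      Q.PosSemidef ∧ Q.toBlocks₁₁ = P₁ ∧ Q.toBlocks₂₂ = P₂ ∧ P = Q + S}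

/-- The ESCI centralized bound `Bc(ω) = blockdiag(ω⁻¹ P₁, (1-ω)⁻¹ P₂) + S`. -/
def Bc (d : ℕ) (P₁ P₂ : Matrix (Fin d) (Fin d) ℝ)
    (S : Matrix (Fin d ⊕ Fin d) (Fin d ⊕ Fin d) ℝ) (ω : ℝ) :
    Matrix (Fin d ⊕ Fin d) (Fin d ⊕ Fin d) ℝ :=
  Matrix.fromBlocks (ω⁻¹ • P₁) 0 0 ((1 - ω)⁻¹ • P₂) + S

section BlockBounds

variable {m n : Type*} [Fintype m] [Fintype n]

lemma Matrix.PosSemidef.fromBlocks_zero {A : Matrix m m ℝ} {D : Matrix n n ℝ}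
    (hA : A.PosSemidef) (hD : D.PosSemidef) : (fromBlocks A 0 0 D).PosSemidef := by
  rw [posSemidef_iff_dotProduct_mulVec] at *
  refine ⟨hA.1.fromBlocks (by simp) hD.1, fun x => ?_⟩
  rw [← Sum.elim_comp_inl_inr x, fromBlocks_mulVec]
  simp only [Sum.elim_comp_inl, Sum.elim_comp_inr, zero_mulVec, add_zero, zero_add, star_trivial,
    sumElim_dotProduct_sumElim]
  exact add_nonneg (by simpa using hA.2 (x ∘ Sum.inl)) (by simpa using hD.2 (x ∘ Sum.inr))

variable [DecidableEq m] [DecidableEq n]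

lemma posSemidef_fromBlocks_inv_smul_toBlocks_sub {Q : Matrix (m ⊕ n) (m ⊕ n) ℝ}
    (hQ : Q.PosSemidef) {ω : ℝ} (hω : ω ∈ Ioo 0 1) :
    (fromBlocks (ω⁻¹ • Q.toBlocks₁₁) 0 0 ((1 - ω)⁻¹ • Q.toBlocks₂₂) - Q).PosSemidef := by
  obtain ⟨hω0, hω1⟩ := hω
  have h1ω : 1 - ω ≠ 0 := by linarith
  let J : Matrix (m ⊕ n) (m ⊕ n) ℝ := fromBlocks ((1 - ω) • 1) 0 0 (-ω • 1)
  have hJ : fromBlocks (ω⁻¹ • Q.toBlocks₁₁) 0 0 ((1 - ω)⁻¹ • Q.toBlocks₂₂) - Q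
      = (ω * (1 - ω))⁻¹ • (Jᴴ * Q * J) := by
    obtain ⟨A, B, C, D, rfl⟩ : ∃ A B C D, Q = fromBlocks A B C D :=
      ⟨_, _, _, _, (fromBlocks_toBlocks Q).symm⟩
    simp only [J, toBlocks_fromBlocks₁₁, toBlocks_fromBlocks₂₂, fromBlocks_conjTranspose,
      fromBlocks_multiply, fromBlocks_smul, sub_eq_add_neg, fromBlocks_neg, fromBlocks_add,
      conjTranspose_smul, conjTranspose_one, conjTranspose_zero, star_trivial, Matrix.smul_mul,
      Matrix.mul_smul, Matrix.one_mul, Matrix.mul_one, Matrix.zero_mul, Matrix.mul_zero,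
      add_zero, zero_add, smul_smul, fromBlocks_inj]
    refine ⟨?_, ?_, ?_, ?_⟩ <;> (match_scalars; simp only [← sub_eq_add_neg]; field_simp)
    ring
  rw [hJ]
  exact (hQ.conjTranspose_mul_mul_same J).smul (by positivity)

end BlockBounds

section FusionGain

variable {n m : Type*} [Fintype n] [Fintype m] [DecidableEq n] [DecidableEq m]

def fusionGain (A : Matrix n n ℝ) (H : Matrix n m ℝ) : Matrix m n ℝ :=
  (Hᵀ * A⁻¹ * H)⁻¹ * Hᵀ * A⁻¹

lemma fusionGain_mul_self {A : Matrix n n ℝ} {H : Matrix n m ℝ}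
    (h : IsUnit (Hᵀ * A⁻¹ * H)) : fusionGain A H * H = 1 := by
  rw [fusionGain, Matrix.mul_assoc, Matrix.mul_assoc, ← Matrix.mul_assoc Hᵀ,
    nonsing_inv_mul _ ((isUnit_iff_isUnit_det _).mp h)]

omit [DecidableEq m] in
lemma Matrix.PosDef.transpose_mul_inv_mul {A : Matrix n n ℝ} (hA : A.PosDef)
    {H : Matrix n m ℝ} (hH : Function.Injective H.mulVec) : (Hᵀ * A⁻¹ * H).PosDef := by
  simpa only [conjTranspose_eq_transpose_of_trivial] using hA.inv.conjTranspose_mul_mul_same hH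

lemma fusionGain_mul_mul_transpose {A : Matrix n n ℝ} (hA : A.PosDef) {H : Matrix n m ℝ}
    (hH : Function.Injective H.mulVec) :
    fusionGain A H * A * (fusionGain A H)ᵀ = (Hᵀ * A⁻¹ * H)⁻¹ := by
  have hKt : (fusionGain A H)ᵀ = A⁻¹ * H * (Hᵀ * A⁻¹ * H)⁻¹ := by
    simp only [fusionGain, transpose_mul, transpose_nonsing_inv,
      (isHermitian_iff_isSymm.mp hA.isHermitian).eq, transpose_transpose, Matrix.mul_assoc]
  have := hA.isUnit.invertible
  have := (hA.transpose_mul_inv_mul hH).isUnit.invertible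
  rw [hKt, fusionGain]
  set F := Hᵀ * A⁻¹ * H
  calc F⁻¹ * Hᵀ * A⁻¹ * A * (A⁻¹ * H * F⁻¹) = F⁻¹ * F * F⁻¹ := by
        rw [Matrix.mul_assoc _ A⁻¹ A, inv_mul_of_invertible, Matrix.mul_one]
        simp only [F, Matrix.mul_assoc]
    _ = F⁻¹ := by rw [inv_mul_of_invertible, Matrix.one_mul]

lemma posSemidef_inv_sub_fusionGain_mul_mul_transpose {A P : Matrix n n ℝ} (hA : A.PosDef)
    {H : Matrix n m ℝ} (hH : Function.Injective H.mulVec) (hP : (A - P).PosSemidef) :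
    ((Hᵀ * A⁻¹ * H)⁻¹ - fusionGain A H * P * (fusionGain A H)ᵀ).PosSemidef := by
  rw [← fusionGain_mul_mul_transpose hA hH, ← Matrix.sub_mul, ← Matrix.mul_sub,
    ← conjTranspose_eq_transpose_of_trivial]
  exact hP.mul_mul_conjTranspose_same _

end FusionGain

lemma Hmat_mulVec_injective (d : ℕ) : Function.Injective (Hmat d).mulVec := by
  intro x y hxy
  funext i
  simpa [Hmat, fromRows_mulVec] using congrFun hxy (Sum.inl i)

lemma posDef_Bc {d : ℕ} {P₁ P₂ : Matrix (Fin d) (Fin d) ℝ} (hP₁ : P₁.PosSemidef)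
    (hP₂ : P₂.PosSemidef) {S : Matrix (Fin d ⊕ Fin d) (Fin d ⊕ Fin d) ℝ} (hS : S.PosDef)
    {ω : ℝ} (hω : ω ∈ Ioo 0 1) : (Bc d P₁ P₂ S ω).PosDef :=
  have h1ω : 0 ≤ 1 - ω := by linarith [hω.2]
  PosDef.posSemidef_add
    ((hP₁.smul (inv_nonneg.mpr hω.1.le)).fromBlocks_zero (hP₂.smul (inv_nonneg.mpr h1ω))) hS

lemma posSemidef_Bc_sub_of_mem_Adm {d : ℕ} {P₁ P₂ : Matrix (Fin d) (Fin d) ℝ}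
    {S P : Matrix (Fin d ⊕ Fin d) (Fin d ⊕ Fin d) ℝ} (hP : P ∈ Adm d P₁ P₂ S) {ω : ℝ}
    (hω : ω ∈ Ioo 0 1) : (Bc d P₁ P₂ S ω - P).PosSemidef := by
  obtain ⟨Q, hQ, rfl, rfl, rfl⟩ := hP
  simpa only [Bc, add_sub_add_right_eq_sub] using posSemidef_fromBlocks_inv_smul_toBlocks_sub hQ hω

theorem esci_is_conservative_general (d : ℕ)
    (P₁ P₂ : Matrix (Fin d) (Fin d) ℝ) (hP₁ : P₁.PosDef) (hP₂ : P₂.PosDef)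
    (S : Matrix (Fin d ⊕ Fin d) (Fin d ⊕ Fin d) ℝ) (hS : S.PosDef) :
    ∀ ω ∈ Set.Ioo (0 : ℝ) 1,
      (∀ P ∈ Adm d P₁ P₂ S, (Bc d P₁ P₂ S ω - P).PosSemidef) ∧
      (((Hmat d)ᵀ * (Bc d P₁ P₂ S ω)⁻¹ * Hmat d)⁻¹ * (Hmat d)ᵀ * (Bc d P₁ P₂ S ω)⁻¹)
          * Hmat d = 1 ∧
      ∀ P ∈ Adm d P₁ P₂ S,
        (((Hmat d)ᵀ * (Bc d P₁ P₂ S ω)⁻¹ * Hmat d)⁻¹ -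
          (((Hmat d)ᵀ * (Bc d P₁ P₂ S ω)⁻¹ * Hmat d)⁻¹ * (Hmat d)ᵀ * (Bc d P₁ P₂ S ω)⁻¹)
            * P *
          (((Hmat d)ᵀ * (Bc d P₁ P₂ S ω)⁻¹ * Hmat d)⁻¹ * (Hmat d)ᵀ * (Bc d P₁ P₂ S ω)⁻¹)ᵀ).PosSemidef := by
  intro ω hω
  have hBc := posDef_Bc hP₁.posSemidef hP₂.posSemidef hS hω
  have hH := Hmat_mulVec_injective d
  refine ⟨fun P hP => posSemidef_Bc_sub_of_mem_Adm hP hω, ?_, fun P hP => ?_⟩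
  · exact fusionGain_mul_self (hBc.transpose_mul_inv_mul hH).isUnit
  · exact posSemidef_inv_sub_fusionGain_mul_mul_transpose hBc hH
      (posSemidef_Bc_sub_of_mem_Adm hP hω)

/-- for every `ω ∈ (0,1)`, the centralized ESCI bound dominates every
admissible covariance, and the pair `(K(ω), B_F(ω))` is a conservative fusion over `𝒜`. -/
theorem esci_is_conservative (d : ℕ) (hd : 1 ≤ d)
    (P₁ P₂ : Matrix (Fin d) (Fin d) ℝ) (hP₁ : P₁.PosDef) (hP₂ : P₂.PosDef)
    (S : Matrix (Fin d ⊕ Fin d) (Fin d ⊕ Fin d) ℝ) (hS : S.PosDef) :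
    ∀ ω ∈ Set.Ioo (0 : ℝ) 1,
      (∀ P ∈ Adm d P₁ P₂ S, (Bc d P₁ P₂ S ω - P).PosSemidef) ∧
      (((Hmat d)ᵀ * (Bc d P₁ P₂ S ω)⁻¹ * Hmat d)⁻¹ * (Hmat d)ᵀ * (Bc d P₁ P₂ S ω)⁻¹)
          * Hmat d = 1 ∧
      ∀ P ∈ Adm d P₁ P₂ S,
        (((Hmat d)ᵀ * (Bc d P₁ P₂ S ω)⁻¹ * Hmat d)⁻¹ -
          (((Hmat d)ᵀ * (Bc d P₁ P₂ S ω)⁻¹ * Hmat d)⁻¹ * (Hmat d)ᵀ * (Bc d P₁ P₂ S ω)⁻¹)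
            * P *
          (((Hmat d)ᵀ * (Bc d P₁ P₂ S ω)⁻¹ * Hmat d)⁻¹ * (Hmat d)ᵀ * (Bc d P₁ P₂ S ω)⁻¹)ᵀ).PosSemidef :=
  esci_is_conservative_general d P₁ P₂ hP₁ hP₂ S hS
end
end

section
/- Let d, N ≥ 1, let H ∈ ℝ^{Nd×d} be the matrix of N stacked d×d identity blocks, let P be a symmetric positive definite Nd×Nd real matrix, let K ∈ ℝ^{d×Nd} satisfy K H = I_d, and let B be a symmetric d×d matrix with K P Kᵀ ⪯ B. Then (Hᵀ P⁻¹ H)⁻¹ ⪯ B. -/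
/-!
Any left inverse `G` of `H` splits as `G = S Hᴴ P⁻¹ + L` with `S = (Hᴴ P⁻¹ H)⁻¹` and `L H = 0`.
The cross terms of `G P Gᴴ` then vanish, leaving `G P Gᴴ = S + L P Lᴴ ⪰ S` (Gauss–Markov);
the bound `B ⪰ K P Kᵀ` inherits this. Invertibility of `Hᴴ P⁻¹ H` comes from `G H = 1`, which
makes `H` injective.
-/

open Matrix

namespace Matrix

variable {m n 𝕜 : Type*} [Fintype m] [Fintype n] [DecidableEq m] [DecidableEq n]
  [Field 𝕜] [StarRing 𝕜]

theorem mul_mul_conjTranspose_eq_inv_add_of_mul_eq_one {P : Matrix m m 𝕜} (hP : P.IsHermitian)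
    (hPunit : IsUnit P) {H : Matrix m n 𝕜} (hM : IsUnit (Hᴴ * P⁻¹ * H)) {G : Matrix n m 𝕜}
    (hGH : G * H = 1) :
    G * P * Gᴴ = (Hᴴ * P⁻¹ * H)⁻¹ +
      (G - (Hᴴ * P⁻¹ * H)⁻¹ * Hᴴ * P⁻¹) * P * (G - (Hᴴ * P⁻¹ * H)⁻¹ * Hᴴ * P⁻¹)ᴴ := by
  have hMh : (Hᴴ * P⁻¹ * H)ᴴ = Hᴴ * P⁻¹ * H := by
    rw [conjTranspose_mul, conjTranspose_mul, conjTranspose_nonsing_inv, hP.eq,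
      conjTranspose_conjTranspose, Matrix.mul_assoc]
  set S := (Hᴴ * P⁻¹ * H)⁻¹
  have hS : Sᴴ = S := by rw [conjTranspose_nonsing_inv, hMh]
  have hSM : S * (Hᴴ * (P⁻¹ * (H * S))) = S := by
    rw [← Matrix.mul_assoc P⁻¹, ← Matrix.mul_assoc Hᴴ, ← Matrix.mul_assoc Hᴴ,
      nonsing_inv_mul_cancel_left _ _ ((isUnit_iff_isUnit_det _).mp hM)]
  have hGHS : G * (H * S) = S := by rw [← Matrix.mul_assoc, hGH, Matrix.one_mul]
  have hHG : Hᴴ * Gᴴ = 1 := by rw [← conjTranspose_mul, hGH, conjTranspose_one]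
  have hPdet := (isUnit_iff_isUnit_det P).mp hPunit
  simp only [conjTranspose_sub, conjTranspose_mul, conjTranspose_conjTranspose, hS,
    conjTranspose_nonsing_inv, hP.eq, Matrix.sub_mul, Matrix.mul_sub, Matrix.mul_assoc, mul_nonsing_inv_cancel_left _ _ hPdet,
    nonsing_inv_mul_cancel_left _ _ hPdet, hSM, hGHS, hHG, Matrix.mul_one]
  abel

theorem PosDef.posSemidef_mul_mul_conjTranspose_sub_inv_of_mul_eq_one [PartialOrder 𝕜]
    [StarOrderedRing 𝕜] {P : Matrix m m 𝕜} (hP : P.PosDef) {H : Matrix m n 𝕜} {G : Matrix n m 𝕜}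
    (hGH : G * H = 1) :
    (G * P * Gᴴ - (Hᴴ * P⁻¹ * H)⁻¹).PosSemidef := by
  have hH : Function.Injective H.mulVec :=
    Function.LeftInverse.injective (g := G.mulVec) fun x => by rw [mulVec_mulVec, hGH, one_mulVec]
  have hM : (Hᴴ * P⁻¹ * H).PosDef := hP.inv.conjTranspose_mul_mul_same hH
  rw [mul_mul_conjTranspose_eq_inv_add_of_mul_eq_one hP.isHermitian hP.isUnit hM.isUnit hGH,
    add_sub_cancel_left]
  exact hP.posSemidef.mul_mul_conjTranspose_same _

end Matrix

theorem conservative_bound_dominates_optimal_general (d N : ℕ)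
    (H : Matrix (Fin N × Fin d) (Fin d) ℝ)
    (P : Matrix (Fin N × Fin d) (Fin N × Fin d) ℝ) (hP : P.PosDef)
    (K : Matrix (Fin d) (Fin N × Fin d) ℝ) (hK : K * H = 1)
    (B : Matrix (Fin d) (Fin d) ℝ)
    (hKB : (B - K * P * Kᵀ).PosSemidef) :
    (B - (Hᵀ * P⁻¹ * H)⁻¹).PosSemidef := by
  have hgain := hP.posSemidef_mul_mul_conjTranspose_sub_inv_of_mul_eq_one hK
  rw [conjTranspose_eq_transpose_of_trivial, conjTranspose_eq_transpose_of_trivial] at hgain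
  simpa only [sub_add_sub_cancel] using hKB.add hgain

/-- any conservative bound for a fusion gain dominates the optimal
fused covariance `(Hᵀ P⁻¹ H)⁻¹`. -/
theorem conservative_bound_dominates_optimal (d N : ℕ) (hd : 1 ≤ d) (hN : 1 ≤ N)
    (H : Matrix (Fin N × Fin d) (Fin d) ℝ)
    (hH : ∀ p k, H p k = if p.2 = k then (1 : ℝ) else 0)
    (P : Matrix (Fin N × Fin d) (Fin N × Fin d) ℝ) (hP : P.PosDef)
    (K : Matrix (Fin d) (Fin N × Fin d) ℝ) (hK : K * H = 1)
    (B : Matrix (Fin d) (Fin d) ℝ) (hB : B.IsSymm)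
    (hKB : (B - K * P * Kᵀ).PosSemidef) :
    (B - (Hᵀ * P⁻¹ * H)⁻¹).PosSemidef :=
  conservative_bound_dominates_optimal_general d N H P hP K hK B hKB
end

section
/- For every x ∈ ℝᵈ with x ≠ 0, the function h_x : [0,1] → ℝ, h_x(ω) = xᵀ A_F(ω) x, is strictly concave on [0,1]. -/
open Matrix Set

noncomputable section

/-- The fused ESCI precision matrix `A_F(ω) = Hᵀ Bc(ω)⁻¹ H`, continuously
extended at the endpoints. -/
def AF (d : ℕ) (P₁ P₂ : Matrix (Fin d) (Fin d) ℝ)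
    (S : Matrix (Fin d ⊕ Fin d) (Fin d ⊕ Fin d) ℝ) (ω : ℝ) :
    Matrix (Fin d) (Fin d) ℝ :=
  if ω = 0 then (P₂ + S.toBlocks₂₂)⁻¹
  else if ω = 1 then (P₁ + S.toBlocks₁₁)⁻¹
  else (Hmat d)ᵀ * (Bc d P₁ P₂ S ω)⁻¹ * Hmat d

/-!
Write `v = H x`, `E(ω) = blockdiag(ω P₁⁻¹, (1 - ω) P₂⁻¹)` and `M(ω) = S⁻¹ + E(ω)`. The Woodbury
identity gives `Bc(ω)⁻¹ = S⁻¹ - S⁻¹ M(ω)⁻¹ S⁻¹` for `0 < ω < 1`, and applied to the rank-`d`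
updates `E(0)` and `E(1)` it gives the endpoint values of `A_F`; so on all of `[0, 1]`,
`h_x(ω) = vᵀ S⁻¹ v - wᵀ M(ω)⁻¹ w` with `w = S⁻¹ v ≠ 0`.

`M(ω)` is positive definite on `[0, 1]` and affine in `ω` with invertible slope
`blockdiag(P₁⁻¹, -P₂⁻¹)`. Now `wᵀ M⁻¹ w` is the supremum over `u` of `2 uᵀ w - uᵀ M u`, attained
exactly at `M u = w`; along the line each of these is affine in `ω`, and none attains the
supremum at two distinct points, so `ω ↦ wᵀ M(ω)⁻¹ w` is strictly convex.
-/

namespace Matrix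

variable {ι κ : Type*} [Fintype ι] [DecidableEq ι] [Fintype κ] [DecidableEq κ]

theorem inv_sub_inv_mul_inv_add_mul_inv_mul_inv {α : Type*} [CommRing α] {S : Matrix ι ι α}
    {P : Matrix κ κ α} (U : Matrix ι κ α) (V : Matrix κ ι α) (hS : IsUnit S) (hP : IsUnit P)
    (hPS : IsUnit (P + V * S * U)) :
    S⁻¹ - S⁻¹ * (S⁻¹ + U * P⁻¹ * V)⁻¹ * S⁻¹ = U * (P + V * S * U)⁻¹ * V := by
  have hS' : IsUnit S.det := (isUnit_iff_isUnit_det S).mp hS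
  have hP' : IsUnit P.det := (isUnit_iff_isUnit_det P).mp hP
  rw [add_mul_mul_inv_eq_sub _ _ _ _ (isUnit_nonsing_inv_iff.mpr hS)
      (isUnit_nonsing_inv_iff.mpr hP) (by rwa [nonsing_inv_nonsing_inv _ hS',
        nonsing_inv_nonsing_inv _ hP']),
    nonsing_inv_nonsing_inv _ hS', nonsing_inv_nonsing_inv _ hP']
  simp only [Matrix.mul_sub, Matrix.sub_mul, nonsing_inv_mul _ hS', Matrix.mul_assoc,
    mul_nonsing_inv _ hS', Matrix.mul_one, Matrix.one_mul, nonsing_inv_mul_cancel_left _ _ hS']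
  abel

theorem PosDef.transpose_mul_inv_sub_mul_mul_eq_inv {S : Matrix ι ι ℝ} {P : Matrix κ κ ℝ}
    (hS : S.PosDef) (hP : P.PosDef) {L U : Matrix ι κ ℝ} (hLU : Lᵀ * U = 1) :
    Lᵀ * (S⁻¹ - S⁻¹ * (S⁻¹ + U * P⁻¹ * Uᵀ)⁻¹ * S⁻¹) * L = (P + Uᵀ * S * U)⁻¹ := by
  have hPS : (P + Uᵀ * S * U).PosDef := by
    simpa using hP.add_posSemidef (hS.posSemidef.conjTranspose_mul_mul_same U)
  have hUL : Uᵀ * L = 1 := by rw [← transpose_transpose L, ← transpose_mul, hLU, transpose_one]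
  rw [inv_sub_inv_mul_inv_add_mul_inv_mul_inv U Uᵀ hS.isUnit hP.isUnit hPS.isUnit]
  simp only [← Matrix.mul_assoc, hLU, Matrix.one_mul]
  rw [Matrix.mul_assoc, hUL, Matrix.mul_one]

lemma PosSemidef.fromBlocks_zero₁₂_zero₂₁ {m n R : Type*} [Fintype m] [Fintype n]
    [DecidableEq m] [DecidableEq n] [CommRing R] [PartialOrder R] [StarRing R]
    [StarOrderedRing R] {A : Matrix m m R} {D : Matrix n n R} (hA : A.PosSemidef)
    (hD : D.PosSemidef) : (fromBlocks A 0 0 D).PosSemidef := by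
  have h : fromBlocks A 0 0 D = (fromRows 1 0 : Matrix (m ⊕ n) m R) * A *
      (fromRows 1 0 : Matrix (m ⊕ n) m R)ᴴ +
      (fromRows 0 1 : Matrix (m ⊕ n) n R) * D * (fromRows 0 1 : Matrix (m ⊕ n) n R)ᴴ := by
    ext (i | i) (j | j) <;> simp [Matrix.mul_apply, Matrix.one_apply, apply_ite star]
  rw [h]
  exact (hA.mul_mul_conjTranspose_same _).add (hD.mul_mul_conjTranspose_same _)

lemma dotProduct_transpose_mul_mul_mulVec {ι κ : Type*} [Fintype ι] [Fintype κ]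
    (L : Matrix ι κ ℝ) (G : Matrix ι ι ℝ) (x : κ → ℝ) :
    x ⬝ᵥ (Lᵀ * G * L) *ᵥ x = (L *ᵥ x) ⬝ᵥ G *ᵥ L *ᵥ x := by
  rw [← mulVec_mulVec, ← mulVec_mulVec, dotProduct_mulVec, vecMul_transpose]

lemma IsHermitian.dotProduct_inv_sub_inv_mul_mul_inv_mulVec {S : Matrix ι ι ℝ}
    (hS : S.IsHermitian) (N : Matrix ι ι ℝ) (v : ι → ℝ) :
    v ⬝ᵥ (S⁻¹ - S⁻¹ * N * S⁻¹) *ᵥ v = v ⬝ᵥ S⁻¹ *ᵥ v - (S⁻¹ *ᵥ v) ⬝ᵥ N *ᵥ S⁻¹ *ᵥ v := by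
  have hSt : S⁻¹ᵀ = S⁻¹ := by simpa using hS.inv.eq
  rw [sub_mulVec, dotProduct_sub, ← mulVec_mulVec, ← mulVec_mulVec,
    dotProduct_mulVec v S⁻¹ (N *ᵥ S⁻¹ *ᵥ v), ← mulVec_transpose, hSt]

section VariationalQuadraticForm

variable {M : Matrix ι ι ℝ}

lemma IsHermitian.dotProduct_inv_mulVec_sub (hM : M.IsHermitian) (hM' : IsUnit M)
    (u w : ι → ℝ) :
    w ⬝ᵥ M⁻¹ *ᵥ w - (2 * (u ⬝ᵥ w) - u ⬝ᵥ M *ᵥ u) =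
      (u - M⁻¹ *ᵥ w) ⬝ᵥ M *ᵥ (u - M⁻¹ *ᵥ w) := by
  have hMw : M *ᵥ M⁻¹ *ᵥ w = w := by
    rw [mulVec_mulVec, mul_nonsing_inv _ ((isUnit_iff_isUnit_det M).mp hM'), one_mulVec]
  have hsymm : ∀ y z : ι → ℝ, y ⬝ᵥ M *ᵥ z = z ⬝ᵥ M *ᵥ y := fun y z => by
    rw [dotProduct_mulVec, ← mulVec_transpose, dotProduct_comm,
      show Mᵀ = M by simpa using hM.eq]
  rw [mulVec_sub, hMw, dotProduct_sub, sub_dotProduct, sub_dotProduct, hsymm (M⁻¹ *ᵥ w) u, hMw,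
    dotProduct_comm u w, dotProduct_comm w (M⁻¹ *ᵥ w)]
  ring

lemma PosDef.two_mul_dotProduct_sub_le (hM : M.PosDef) (u w : ι → ℝ) :
    2 * (u ⬝ᵥ w) - u ⬝ᵥ M *ᵥ u ≤ w ⬝ᵥ M⁻¹ *ᵥ w :=
  sub_nonneg.mp <| hM.isHermitian.dotProduct_inv_mulVec_sub hM.isUnit u w ▸ by
    simpa using hM.posSemidef.dotProduct_mulVec_nonneg (u - M⁻¹ *ᵥ w)

lemma PosDef.two_mul_dotProduct_sub_lt (hM : M.PosDef) {u w : ι → ℝ} (h : M *ᵥ u ≠ w) :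
    2 * (u ⬝ᵥ w) - u ⬝ᵥ M *ᵥ u < w ⬝ᵥ M⁻¹ *ᵥ w := by
  have hu : u - M⁻¹ *ᵥ w ≠ 0 := fun h0 => h <| by
    rw [sub_eq_zero.mp h0, mulVec_mulVec,
      mul_nonsing_inv _ ((isUnit_iff_isUnit_det M).mp hM.isUnit), one_mulVec]
  refine sub_pos.mp <| hM.isHermitian.dotProduct_inv_mulVec_sub hM.isUnit u w ▸ ?_
  simpa using hM.dotProduct_mulVec_pos hu

lemma PosDef.two_mul_dotProduct_sub_eq (hM : M.PosDef) {u w : ι → ℝ} (h : M *ᵥ u = w) :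
    2 * (u ⬝ᵥ w) - u ⬝ᵥ M *ᵥ u = w ⬝ᵥ M⁻¹ *ᵥ w := by
  have hu : u - M⁻¹ *ᵥ w = 0 := by
    rw [← h, mulVec_mulVec, nonsing_inv_mul _ ((isUnit_iff_isUnit_det M).mp hM.isUnit),
      one_mulVec, sub_self]
  have := hM.isHermitian.dotProduct_inv_mulVec_sub hM.isUnit u w
  rw [hu, mulVec_zero, dotProduct_zero, sub_eq_zero] at this
  exact this.symm

end VariationalQuadraticForm

theorem strictConvexOn_dotProduct_inv_add_smul_mulVec {s : Set ℝ} (hs : Convex ℝ s)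
    {A F : Matrix ι ι ℝ} (hpd : ∀ ω ∈ s, (A + ω • F).PosDef) (hF : IsUnit F) {w : ι → ℝ}
    (hw : w ≠ 0) : StrictConvexOn ℝ s fun ω => w ⬝ᵥ (A + ω • F)⁻¹ *ᵥ w := by
  refine ⟨hs, fun a ha b hb hab t r ht hr htr => ?_⟩
  set c := t • a + r • b
  have hc : c ∈ s := hs ha hb ht.le hr.le htr
  set u := (A + c • F)⁻¹ *ᵥ w
  have hu : (A + c • F) *ᵥ u = w := by
    rw [mulVec_mulVec, mul_nonsing_inv _ ((isUnit_iff_isUnit_det _).mp (hpd c hc).isUnit),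
      one_mulVec]
  let q : ℝ → ℝ := fun ω => 2 * (u ⬝ᵥ w) - u ⬝ᵥ (A + ω • F) *ᵥ u
  have hq : q c = t * q a + r * q b := by
    simp only [q, c, add_mulVec, smul_mulVec, dotProduct_add, dotProduct_smul, smul_eq_mul]
    linear_combination (2 * (u ⬝ᵥ w) - u ⬝ᵥ A *ᵥ u) * htr.symm
  have hne : (A + a • F) *ᵥ u ≠ w ∨ (A + b • F) *ᵥ u ≠ w := by
    by_contra! h
    have hFu : (a - b) • F *ᵥ u = 0 := by
      have h' := congrArg₂ (· - ·) h.1 h.2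
      simp only [add_mulVec, smul_mulVec, add_sub_add_left_eq_sub, sub_self] at h'
      rwa [sub_smul]
    have hu0 : u = 0 := by
      rw [smul_eq_zero, or_iff_right (sub_ne_zero.mpr hab)] at hFu
      exact (mulVec_injective_iff_isUnit.mpr hF) (hFu.trans (mulVec_zero F).symm)
    exact hw (by simpa [hu0] using h.1.symm)
  have hqc : q c = w ⬝ᵥ (A + c • F)⁻¹ *ᵥ w := (hpd c hc).two_mul_dotProduct_sub_eq hu
  change w ⬝ᵥ (A + c • F)⁻¹ *ᵥ w <
    t * (w ⬝ᵥ (A + a • F)⁻¹ *ᵥ w) + r * (w ⬝ᵥ (A + b • F)⁻¹ *ᵥ w)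
  rw [← hqc, hq]
  rcases hne with h | h
  · nlinarith [(hpd a ha).two_mul_dotProduct_sub_lt h, (hpd b hb).two_mul_dotProduct_sub_le u w]
  · nlinarith [(hpd a ha).two_mul_dotProduct_sub_le u w, (hpd b hb).two_mul_dotProduct_sub_lt h]

end Matrix

section ESCI

variable {d : ℕ} {P₁ P₂ : Matrix (Fin d) (Fin d) ℝ} {S : Matrix (Fin d ⊕ Fin d) (Fin d ⊕ Fin d) ℝ}

local notation "J₁" => (fromRows 1 0 : Matrix (Fin d ⊕ Fin d) (Fin d) ℝ)
local notation "J₂" => (fromRows 0 1 : Matrix (Fin d ⊕ Fin d) (Fin d) ℝ)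

/-- `E(ω)`: the inverse of the block-diagonal part of `Bc ω`, extended to `ω ∈ {0, 1}`. -/
def weightedCov (P₁ P₂ : Matrix (Fin d) (Fin d) ℝ) (ω : ℝ) :
    Matrix (Fin d ⊕ Fin d) (Fin d ⊕ Fin d) ℝ :=
  fromBlocks (ω • P₁⁻¹) 0 0 ((1 - ω) • P₂⁻¹)

lemma weightedCov_eq_add_smul (ω : ℝ) :
    weightedCov P₁ P₂ ω = fromBlocks 0 0 0 P₂⁻¹ + ω • fromBlocks P₁⁻¹ 0 0 (-P₂⁻¹) := by
  rw [weightedCov, fromBlocks_smul, fromBlocks_add]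
  congr 1 <;> module

lemma weightedCov_zero : weightedCov P₁ P₂ 0 = J₂ * P₂⁻¹ * J₂ᵀ := by
  rw [transpose_fromRows, fromRows_mul, fromRows_mul_fromCols]
  simp [weightedCov]

lemma weightedCov_one : weightedCov P₁ P₂ 1 = J₁ * P₁⁻¹ * J₁ᵀ := by
  rw [transpose_fromRows, fromRows_mul, fromRows_mul_fromCols]
  simp [weightedCov]

lemma posSemidef_weightedCov (hP₁ : P₁.PosDef) (hP₂ : P₂.PosDef) {ω : ℝ} (hω : ω ∈ Icc 0 1) :
    (weightedCov P₁ P₂ ω).PosSemidef :=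
  (hP₁.inv.posSemidef.smul hω.1).fromBlocks_zero₁₂_zero₂₁
    (hP₂.inv.posSemidef.smul (sub_nonneg.mpr hω.2))

lemma mul_weightedCov (hP₁ : P₁.PosDef) (hP₂ : P₂.PosDef) {ω : ℝ} (hω : ω ∈ Ioo 0 1) :
    fromBlocks (ω⁻¹ • P₁) 0 0 ((1 - ω)⁻¹ • P₂) * weightedCov P₁ P₂ ω = 1 := by
  have h1 : ω ≠ 0 := hω.1.ne'
  have h2 : 1 - ω ≠ 0 := (sub_pos.mpr hω.2).ne'
  simp [weightedCov, fromBlocks_multiply, smul_smul, h1, h2,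
    mul_nonsing_inv _ ((isUnit_iff_isUnit_det _).mp hP₁.isUnit),
    mul_nonsing_inv _ ((isUnit_iff_isUnit_det _).mp hP₂.isUnit)]

lemma toBlocks₁₁_eq_transpose_mul_mul : S.toBlocks₁₁ = J₁ᵀ * S * J₁ := by
  ext i j
  simp [Matrix.mul_apply, Matrix.one_apply, Fintype.sum_sum_type, toBlocks₁₁]

lemma toBlocks₂₂_eq_transpose_mul_mul : S.toBlocks₂₂ = J₂ᵀ * S * J₂ := by
  ext i j
  simp [Matrix.mul_apply, Matrix.one_apply, Fintype.sum_sum_type, toBlocks₂₂]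

lemma transpose_Hmat_mul_fromRows_one_zero : (Hmat d)ᵀ * J₁ = 1 := by
  simp [Hmat, transpose_fromRows, fromCols_mul_fromRows]

lemma transpose_Hmat_mul_fromRows_zero_one : (Hmat d)ᵀ * J₂ = 1 := by
  simp [Hmat, transpose_fromRows, fromCols_mul_fromRows]

lemma inv_Bc (hP₁ : P₁.PosDef) (hP₂ : P₂.PosDef) (hS : S.PosDef) {ω : ℝ} (hω : ω ∈ Ioo 0 1) :
    (Bc d P₁ P₂ S ω)⁻¹ = S⁻¹ - S⁻¹ * (S⁻¹ + weightedCov P₁ P₂ ω)⁻¹ * S⁻¹ := by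
  set D := fromBlocks (ω⁻¹ • P₁) 0 0 ((1 - ω)⁻¹ • P₂)
  have hDW : D * weightedCov P₁ P₂ ω = 1 := mul_weightedCov hP₁ hP₂ hω
  have hD : IsUnit D := (isUnit_iff_isUnit_det D).mpr (isUnit_det_of_right_inverse hDW)
  have hBc : (D + S).PosDef := by
    rw [add_comm, ← inv_eq_left_inv hDW]
    exact hS.add_posSemidef (posSemidef_weightedCov hP₁ hP₂ (Ioo_subset_Icc_self hω)).inv
  have := inv_sub_inv_mul_inv_add_mul_inv_mul_inv 1 1 hS.isUnit hD (by simpa using hBc.isUnit)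
  simp only [Matrix.one_mul, Matrix.mul_one, inv_eq_right_inv hDW] at this
  exact this.symm

lemma AF_eq (hP₁ : P₁.PosDef) (hP₂ : P₂.PosDef) (hS : S.PosDef) {ω : ℝ} (hω : ω ∈ Icc 0 1) :
    AF d P₁ P₂ S ω =
      (Hmat d)ᵀ * (S⁻¹ - S⁻¹ * (S⁻¹ + weightedCov P₁ P₂ ω)⁻¹ * S⁻¹) * Hmat d := by
  unfold AF
  split_ifs with h0 h1
  · rw [h0, weightedCov_zero, hS.transpose_mul_inv_sub_mul_mul_eq_inv hP₂
      transpose_Hmat_mul_fromRows_zero_one, ← toBlocks₂₂_eq_transpose_mul_mul]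
  · rw [h1, weightedCov_one, hS.transpose_mul_inv_sub_mul_mul_eq_inv hP₁
      transpose_Hmat_mul_fromRows_one_zero, ← toBlocks₁₁_eq_transpose_mul_mul]
  · rw [inv_Bc hP₁ hP₂ hS ⟨lt_of_le_of_ne hω.1 (Ne.symm h0), lt_of_le_of_ne hω.2 h1⟩]

end ESCI

theorem hfun_strictConcaveOn_general (d : ℕ)
    (P₁ P₂ : Matrix (Fin d) (Fin d) ℝ) (hP₁ : P₁.PosDef) (hP₂ : P₂.PosDef)
    (S : Matrix (Fin d ⊕ Fin d) (Fin d ⊕ Fin d) ℝ) (hS : S.PosDef)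
    (x : Fin d → ℝ) (hx : x ≠ 0) :
    StrictConcaveOn ℝ (Set.Icc (0 : ℝ) 1)
      (fun ω : ℝ => x ⬝ᵥ (AF d P₁ P₂ S ω) *ᵥ x) := by
  set v := Hmat d *ᵥ x
  have hw : S⁻¹ *ᵥ v ≠ 0 := fun h => hx <| funext fun i => by
    have hv : v = 0 := mulVec_injective_iff_isUnit.mpr hS.inv.isUnit (h.trans (mulVec_zero _).symm)
    simpa [v, Hmat, fromRows_mulVec] using congrFun hv (Sum.inl i)
  have hpd : ∀ ω ∈ Icc (0 : ℝ) 1,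
      (S⁻¹ + fromBlocks 0 0 0 P₂⁻¹ + ω • fromBlocks P₁⁻¹ 0 0 (-P₂⁻¹)).PosDef := fun ω hω => by
    rw [add_assoc, ← weightedCov_eq_add_smul]
    exact hS.inv.add_posSemidef (posSemidef_weightedCov hP₁ hP₂ hω)
  have hF : IsUnit (fromBlocks P₁⁻¹ 0 0 (-P₂⁻¹)) := by
    simp [isUnit_nonsing_inv_iff, hP₁.isUnit, hP₂.isUnit]
  refine ((concaveOn_const (v ⬝ᵥ S⁻¹ *ᵥ v) (convex_Icc 0 1)).sub_strictConvexOn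
    (strictConvexOn_dotProduct_inv_add_smul_mulVec (convex_Icc 0 1) hpd hF hw)).congr
    fun ω hω => ?_
  simp only [add_assoc, ← weightedCov_eq_add_smul]
  rw [AF_eq hP₁ hP₂ hS hω, dotProduct_transpose_mul_mul_mulVec,
    hS.isHermitian.dotProduct_inv_sub_inv_mul_mul_inv_mulVec]
  rfl

/-- for every `x ≠ 0`, the map `ω ↦ xᵀ A_F(ω) x` is strictly concave
on `[0,1]`. -/
theorem hfun_strictConcaveOn (d : ℕ) (hd : 1 ≤ d)
    (P₁ P₂ : Matrix (Fin d) (Fin d) ℝ) (hP₁ : P₁.PosDef) (hP₂ : P₂.PosDef)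
    (S : Matrix (Fin d ⊕ Fin d) (Fin d ⊕ Fin d) ℝ) (hS : S.PosDef)
    (x : Fin d → ℝ) (hx : x ≠ 0) :
    StrictConcaveOn ℝ (Set.Icc (0 : ℝ) 1)
      (fun ω : ℝ => x ⬝ᵥ (AF d P₁ P₂ S ω) *ᵥ x) :=
  hfun_strictConcaveOn_general d P₁ P₂ hP₁ hP₂ S hS x hx
end
end

section
/- Let x ∈ ℝᵈ with x ≠ 0, and suppose ω₀ ∈ [0,1] is such that the derivative of h_x within [0,1] vanishes at ω₀ (one-sided at the endpoints). Then ω₀ is the unique point of [0,1] with this property, g(x) = h_x(ω₀), and the infimum defining g(x) is attained at some P* ∈ 𝒜, i.e. there exists P* ∈ 𝒜 with xᵀ Hᵀ (P*)⁻¹ H x = h_x(ω₀). -/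
open Matrix Set

noncomputable section

/-- The fused ESCI bound `B_F(ω) = A_F(ω)⁻¹`. -/
def BF (d : ℕ) (P₁ P₂ : Matrix (Fin d) (Fin d) ℝ)
    (S : Matrix (Fin d ⊕ Fin d) (Fin d ⊕ Fin d) ℝ) (ω : ℝ) :
    Matrix (Fin d) (Fin d) ℝ :=
  (AF d P₁ P₂ S ω)⁻¹

/-- `g(x) = inf_{P ∈ 𝒜} xᵀ Hᵀ P⁻¹ H x`. -/
def gfun (d : ℕ) (P₁ P₂ : Matrix (Fin d) (Fin d) ℝ)
    (S : Matrix (Fin d ⊕ Fin d) (Fin d ⊕ Fin d) ℝ) (x : Fin d → ℝ) : ℝ :=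
  ⨅ P : (Adm d P₁ P₂ S),
    x ⬝ᵥ ((Hmat d)ᵀ * ((P : Matrix (Fin d ⊕ Fin d) (Fin d ⊕ Fin d) ℝ))⁻¹ * Hmat d) *ᵥ x

/-- `h_x(ω) = xᵀ A_F(ω) x`. -/
def hfun (d : ℕ) (P₁ P₂ : Matrix (Fin d) (Fin d) ℝ)
    (S : Matrix (Fin d ⊕ Fin d) (Fin d ⊕ Fin d) ℝ) (x : Fin d → ℝ) (ω : ℝ) : ℝ :=
  x ⬝ᵥ (AF d P₁ P₂ S ω) *ᵥ x

/-!
Put `v = H x` and `W(ω) = blockdiag(ω P₁⁻¹, (1 - ω) P₂⁻¹)`. On all of `[0,1]` one has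
`h_x(ω) = vᵀ u(ω)` with `u = (1 + W S)⁻¹ W v`, and the residual `r = v - S u` satisfies `u = W r`.
This gives the secant identity `h(ω) - h(ω') = (ω - ω') r(ω)ᵀ W' r(ω')`, hence
`h'(ω) = r₁ᵀP₁⁻¹r₁ - r₂ᵀP₂⁻¹r₂`.

Weak duality: for `P = Q + S ∈ 𝒜`, `u = ω (P₁⁻¹r₁, 0) + (1 - ω) (0, P₂⁻¹r₂)` and convexity of
`y ↦ yᵀQy` give `uᵀQu ≤ uᵀr`; completing the square then gives
`vᵀP⁻¹v ≥ vᵀu + (P⁻¹v - u)ᵀ P (P⁻¹v - u)`. At a stationary point both `rᵢᵀPᵢ⁻¹rᵢ` equal some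
`γ > 0`, and `Q = [[P₁, γ⁻¹ r₁r₂ᵀ], [γ⁻¹ r₂r₁ᵀ, P₂]]` is positive semidefinite by Cauchy–Schwarz
with `(Q + S) u = v`, so the bound is attained. Two stationary points then share `u`, and
`u = W(ω) r` pins down `ω`.
-/

namespace Matrix

section Algebra

variable {l m n R : Type*} [Fintype m] [Fintype n]

theorem IsSymm.vecMul_eq_mulVec [CommSemiring R] {A : Matrix m m R} (hA : A.IsSymm)
    (x : m → R) : x ᵥ* A = A *ᵥ x := by
  rw [← vecMul_transpose, hA.eq]

theorem IsSymm.dotProduct_mulVec_comm [CommSemiring R] {A : Matrix m m R} (hA : A.IsSymm)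
    (x y : m → R) : x ⬝ᵥ A *ᵥ y = y ⬝ᵥ A *ᵥ x := by
  rw [← dotProduct_transpose_mulVec, hA.eq]

theorem mulVec_comp_inl [NonUnitalNonAssocSemiring R] (M : Matrix (l ⊕ n) (m ⊕ n) R)
    (y : m ⊕ n → R) :
    (M *ᵥ y) ∘ Sum.inl = M.toBlocks₁₁ *ᵥ (y ∘ Sum.inl) + M.toBlocks₁₂ *ᵥ (y ∘ Sum.inr) := by
  conv_lhs => rw [← fromBlocks_toBlocks M, ← Sum.elim_comp_inl_inr y, fromBlocks_mulVec]
  rfl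

theorem mulVec_comp_inr [NonUnitalNonAssocSemiring R] (M : Matrix (m ⊕ l) (m ⊕ n) R)
    (y : m ⊕ n → R) :
    (M *ᵥ y) ∘ Sum.inr = M.toBlocks₂₁ *ᵥ (y ∘ Sum.inl) + M.toBlocks₂₂ *ᵥ (y ∘ Sum.inr) := by
  conv_lhs => rw [← fromBlocks_toBlocks M, ← Sum.elim_comp_inl_inr y, fromBlocks_mulVec]
  rfl

theorem sumElim_dotProduct_fromBlocks_mulVec [NonUnitalNonAssocSemiring R] (A : Matrix m m R)
    (B : Matrix m n R) (C : Matrix n m R) (D : Matrix n n R) (x : m → R) (y : n → R) :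
    Sum.elim x y ⬝ᵥ fromBlocks A B C D *ᵥ Sum.elim x y =
      x ⬝ᵥ A *ᵥ x + x ⬝ᵥ B *ᵥ y + (y ⬝ᵥ C *ᵥ x + y ⬝ᵥ D *ᵥ y) := by
  rw [fromBlocks_mulVec, sumElim_dotProduct_sumElim, Sum.elim_comp_inl, Sum.elim_comp_inr,
    dotProduct_add, dotProduct_add]

end Algebra

variable {m n : Type*} [Fintype m] [Fintype n]

omit [Fintype m] in
theorem PosSemidef.isSymm {A : Matrix m m ℝ} (hA : A.PosSemidef) : A.IsSymm :=
  isHermitian_iff_isSymm.mp hA.isHermitian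

theorem PosDef.mulVec_inv_mulVec [DecidableEq m] {A : Matrix m m ℝ} (hA : A.PosDef)
    (x : m → ℝ) : A *ᵥ (A⁻¹ *ᵥ x) = x := by
  rw [mulVec_mulVec, mul_nonsing_inv _ hA.det_pos.ne'.isUnit, one_mulVec]

theorem PosDef.inv_mulVec_mulVec [DecidableEq m] {A : Matrix m m ℝ} (hA : A.PosDef)
    (x : m → ℝ) : A⁻¹ *ᵥ (A *ᵥ x) = x := by
  rw [mulVec_mulVec, nonsing_inv_mul _ hA.det_pos.ne'.isUnit, one_mulVec]

theorem PosSemidef.convexOn_dotProduct_mulVec_s9 {A : Matrix m m ℝ} (hA : A.PosSemidef) :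
    ConvexOn ℝ univ fun x : m → ℝ => x ⬝ᵥ A *ᵥ x := by
  refine ⟨convex_univ, fun x _ y _ a b ha hb hab => ?_⟩
  have hxy := hA.isSymm.dotProduct_mulVec_comm x y
  have hdiff : 0 ≤ (x - y) ⬝ᵥ A *ᵥ (x - y) := by
    simpa using hA.dotProduct_mulVec_nonneg (x - y)
  simp only [mulVec_add, mulVec_sub, mulVec_smul, dotProduct_add, dotProduct_sub, add_dotProduct,
    sub_dotProduct, dotProduct_smul, smul_dotProduct, smul_eq_mul] at hdiff ⊢
  obtain rfl : b = 1 - a := by linarith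
  nlinarith [mul_nonneg ha hb]

theorem PosDef.sq_dotProduct_le [DecidableEq m] {A : Matrix m m ℝ} (hA : A.PosDef)
    (r y : m → ℝ) : (r ⬝ᵥ y) ^ 2 ≤ (r ⬝ᵥ A⁻¹ *ᵥ r) * (y ⬝ᵥ A *ᵥ y) := by
  set a := A⁻¹ *ᵥ r
  have hsymm := hA.posSemidef.isSymm
  have hay : a ⬝ᵥ A *ᵥ y = r ⬝ᵥ y := by
    rw [hsymm.dotProduct_mulVec_comm, dotProduct_comm, hA.mulVec_inv_mulVec]
  have haa : a ⬝ᵥ A *ᵥ a = r ⬝ᵥ a := by rw [hA.mulVec_inv_mulVec, dotProduct_comm]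
  have hquad (t : ℝ) : 0 ≤ (r ⬝ᵥ a) * (t * t) + 2 * (r ⬝ᵥ y) * t + y ⬝ᵥ A *ᵥ y := by
    have := hA.posSemidef.dotProduct_mulVec_nonneg (t • a + y)
    simp only [star_trivial, mulVec_add, mulVec_smul, dotProduct_add, add_dotProduct,
      dotProduct_smul, smul_dotProduct, smul_eq_mul, hay, haa,
      hsymm.dotProduct_mulVec_comm y a] at this
    linarith
  have := discrim_le_zero hquad
  rw [discrim] at this
  linarith

theorem PosSemidef.fromBlocks_zero_s9 {A : Matrix m m ℝ} {D : Matrix n n ℝ} (hA : A.PosSemidef)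
    (hD : D.PosSemidef) : (fromBlocks A 0 0 D).PosSemidef := by
  refine .of_dotProduct_mulVec_nonneg (hA.isHermitian.fromBlocks (by simp) hD.isHermitian)
    fun x => ?_
  rw [star_trivial, ← Sum.elim_comp_inl_inr x, sumElim_dotProduct_fromBlocks_mulVec]
  simp only [zero_mulVec, dotProduct_zero, add_zero, zero_add]
  exact add_nonneg (by simpa using hA.dotProduct_mulVec_nonneg _)
    (by simpa using hD.dotProduct_mulVec_nonneg _)

theorem posSemidef_fromBlocks_smul_vecMulVec [DecidableEq m] [DecidableEq n] {A : Matrix m m ℝ}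
    {D : Matrix n n ℝ} (hA : A.PosDef) (hD : D.PosDef) {a : m → ℝ} {b : n → ℝ} {γ : ℝ}
    (hγ : 0 < γ) (ha : a ⬝ᵥ A⁻¹ *ᵥ a ≤ γ) (hb : b ⬝ᵥ D⁻¹ *ᵥ b ≤ γ) :
    (fromBlocks A (γ⁻¹ • vecMulVec a b) (γ⁻¹ • vecMulVec a b)ᴴ D).PosSemidef := by
  refine .of_dotProduct_mulVec_nonneg (hA.isHermitian.fromBlocks rfl hD.isHermitian) fun y => ?_
  rw [star_trivial, ← Sum.elim_comp_inl_inr y, sumElim_dotProduct_fromBlocks_mulVec,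
    conjTranspose_eq_transpose_of_trivial, dotProduct_transpose_mulVec]
  set y₁ := y ∘ Sum.inl
  set y₂ := y ∘ Sum.inr
  have hcross : y₁ ⬝ᵥ (γ⁻¹ • vecMulVec a b) *ᵥ y₂ = γ⁻¹ * ((a ⬝ᵥ y₁) * (b ⬝ᵥ y₂)) := by
    rw [smul_mulVec, dotProduct_smul, dotProduct_mulVec, vecMul_vecMulVec, smul_dotProduct,
      smul_eq_mul, smul_eq_mul, dotProduct_comm y₁]
  have h₁ := (hA.sq_dotProduct_le a y₁).trans
    (mul_le_mul_of_nonneg_right ha (by simpa using hA.posSemidef.dotProduct_mulVec_nonneg y₁))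
  have h₂ := (hD.sq_dotProduct_le b y₂).trans
    (mul_le_mul_of_nonneg_right hb (by simpa using hD.posSemidef.dotProduct_mulVec_nonneg y₂))
  rw [hcross]
  refine (mul_nonneg_iff_of_pos_left hγ).mp ?_
  have hγγ : γ * γ⁻¹ = 1 := mul_inv_cancel₀ hγ.ne'
  nlinarith [sq_nonneg (a ⬝ᵥ y₁ + b ⬝ᵥ y₂)]

theorem isUnit_one_add_mul_of_posSemidef_of_posDef [DecidableEq m] {W S : Matrix m m ℝ}
    (hW : W.PosSemidef) (hS : S.PosDef) : IsUnit (1 + W * S) := by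
  rw [isUnit_iff_isUnit_det, isUnit_iff_ne_zero, Ne, ← exists_mulVec_eq_zero_iff]
  rintro ⟨y, hy, hWSy⟩
  have hy_eq : y = -(W *ᵥ (S *ᵥ y)) := by
    rw [add_mulVec, one_mulVec, ← mulVec_mulVec] at hWSy
    exact eq_neg_of_add_eq_zero_left hWSy
  have hle : y ⬝ᵥ S *ᵥ y ≤ 0 := by
    have := hW.dotProduct_mulVec_nonneg (S *ᵥ y)
    rw [star_trivial, dotProduct_comm] at this
    calc y ⬝ᵥ S *ᵥ y = -(W *ᵥ (S *ᵥ y)) ⬝ᵥ S *ᵥ y := by rw [← hy_eq]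
      _ ≤ 0 := by rw [neg_dotProduct]; linarith
  exact (hS.dotProduct_mulVec_pos hy).not_ge (by simpa using hle)

end Matrix

namespace ESCI

section General

variable {n : Type*} [Fintype n] [DecidableEq n] (P₁ P₂ : Matrix n n ℝ)
  (S : Matrix (n ⊕ n) (n ⊕ n) ℝ) (v : n ⊕ n → ℝ)

/-- For `ω ∈ (0,1)` this is `blockdiag(ω⁻¹ P₁, (1 - ω)⁻¹ P₂)⁻¹`, so that `Bc ω = (weight ω)⁻¹ + S`
and `fusedVec v ω = Bc(ω)⁻¹ v`; unlike `Bc`, these stay defined at `ω = 0` and `ω = 1`. -/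
def weight (ω : ℝ) : Matrix (n ⊕ n) (n ⊕ n) ℝ :=
  fromBlocks (ω • P₁⁻¹) 0 0 ((1 - ω) • P₂⁻¹)

def weightDeriv : Matrix (n ⊕ n) (n ⊕ n) ℝ :=
  fromBlocks P₁⁻¹ 0 0 (-P₂⁻¹)

def fusedVec (ω : ℝ) : n ⊕ n → ℝ :=
  (1 + weight P₁ P₂ ω * S)⁻¹ *ᵥ (weight P₁ P₂ ω *ᵥ v)

def residual (ω : ℝ) : n ⊕ n → ℝ :=
  v - S *ᵥ fusedVec P₁ P₂ S v ω

def fusedDeriv (ω : ℝ) : ℝ :=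
  residual P₁ P₂ S v ω ⬝ᵥ weightDeriv P₁ P₂ *ᵥ residual P₁ P₂ S v ω

variable {P₁ P₂ S}

theorem weight_sub_weight (ω ω' : ℝ) :
    weight P₁ P₂ ω - weight P₁ P₂ ω' = (ω - ω') • weightDeriv P₁ P₂ := by
  ext (i | i) (j | j) <;> simp [weight, weightDeriv] <;> ring

theorem weight_mulVec (ω : ℝ) (y : n ⊕ n → ℝ) :
    weight P₁ P₂ ω *ᵥ y =
      Sum.elim (ω • P₁⁻¹ *ᵥ (y ∘ Sum.inl)) ((1 - ω) • P₂⁻¹ *ᵥ (y ∘ Sum.inr)) := by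
  simp [weight, fromBlocks_mulVec, smul_mulVec]

theorem weight_posSemidef (hP₁ : P₁.PosDef) (hP₂ : P₂.PosDef) {ω : ℝ}
    (hω : ω ∈ Icc (0 : ℝ) 1) : (weight P₁ P₂ ω).PosSemidef :=
  .fromBlocks_zero (hP₁.inv.posSemidef.smul hω.1) (hP₂.inv.posSemidef.smul (sub_nonneg.2 hω.2))

theorem weightDeriv_mulVec_ne_zero (hP₁ : P₁.PosDef) (hP₂ : P₂.PosDef) {y : n ⊕ n → ℝ}
    (hy : y ≠ 0) : weightDeriv P₁ P₂ *ᵥ y ≠ 0 := by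
  have hdet : IsUnit (weightDeriv P₁ P₂).det := by
    rw [weightDeriv, det_fromBlocks_zero₂₁]
    exact ((isUnit_iff_isUnit_det _).mp hP₁.inv.isUnit).mul
      ((isUnit_iff_isUnit_det _).mp hP₂.inv.isUnit.neg)
  exact fun h => hdet.ne_zero (exists_mulVec_eq_zero_iff.mp ⟨y, hy, h⟩)

theorem isUnit_one_add_weight_mul (hP₁ : P₁.PosDef) (hP₂ : P₂.PosDef) (hS : S.PosDef) {ω : ℝ}
    (hω : ω ∈ Icc (0 : ℝ) 1) : IsUnit (1 + weight P₁ P₂ ω * S) :=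
  isUnit_one_add_mul_of_posSemidef_of_posDef (weight_posSemidef hP₁ hP₂ hω) hS

theorem one_add_weight_mul_mulVec_fusedVec (hP₁ : P₁.PosDef) (hP₂ : P₂.PosDef) (hS : S.PosDef)
    {ω : ℝ} (hω : ω ∈ Icc (0 : ℝ) 1) :
    (1 + weight P₁ P₂ ω * S) *ᵥ fusedVec P₁ P₂ S v ω = weight P₁ P₂ ω *ᵥ v := by
  rw [fusedVec, mulVec_mulVec, mul_nonsing_inv _
    ((isUnit_iff_isUnit_det _).mp (isUnit_one_add_weight_mul hP₁ hP₂ hS hω)), one_mulVec]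

theorem fusedVec_eq_weight_mulVec_residual (hP₁ : P₁.PosDef) (hP₂ : P₂.PosDef) (hS : S.PosDef)
    {ω : ℝ} (hω : ω ∈ Icc (0 : ℝ) 1) :
    fusedVec P₁ P₂ S v ω = weight P₁ P₂ ω *ᵥ residual P₁ P₂ S v ω := by
  have h := one_add_weight_mul_mulVec_fusedVec v hP₁ hP₂ hS hω
  rw [add_mulVec, one_mulVec, ← mulVec_mulVec] at h
  rw [residual, mulVec_sub, ← h, add_sub_cancel_right]

theorem fusedVec_eq_sumElim (hP₁ : P₁.PosDef) (hP₂ : P₂.PosDef) (hS : S.PosDef) {ω : ℝ}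
    (hω : ω ∈ Icc (0 : ℝ) 1) :
    fusedVec P₁ P₂ S v ω = Sum.elim (ω • P₁⁻¹ *ᵥ (residual P₁ P₂ S v ω ∘ Sum.inl))
      ((1 - ω) • P₂⁻¹ *ᵥ (residual P₁ P₂ S v ω ∘ Sum.inr)) := by
  rw [fusedVec_eq_weight_mulVec_residual v hP₁ hP₂ hS hω, weight_mulVec]

theorem residual_vecMul_one_add_weight_mul (hP₁ : P₁.PosDef) (hP₂ : P₂.PosDef) (hS : S.PosDef)
    {ω : ℝ} (hω : ω ∈ Icc (0 : ℝ) 1) :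
    residual P₁ P₂ S v ω ᵥ* (1 + weight P₁ P₂ ω * S) = v := by
  rw [vecMul_add, vecMul_one, ← vecMul_vecMul,
    (weight_posSemidef hP₁ hP₂ hω).isSymm.vecMul_eq_mulVec,
    ← fusedVec_eq_weight_mulVec_residual v hP₁ hP₂ hS hω, hS.posSemidef.isSymm.vecMul_eq_mulVec,
    residual, sub_add_cancel]

theorem residual_ne_zero (hP₁ : P₁.PosDef) (hP₂ : P₂.PosDef) (hS : S.PosDef) {ω : ℝ}
    (hω : ω ∈ Icc (0 : ℝ) 1) (hv : v ≠ 0) : residual P₁ P₂ S v ω ≠ 0 := by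
  intro hr
  have hu := fusedVec_eq_weight_mulVec_residual v hP₁ hP₂ hS hω
  rw [hr, mulVec_zero] at hu
  rw [residual, hu, mulVec_zero, sub_zero] at hr
  exact hv hr

theorem fusedVec_injOn (hP₁ : P₁.PosDef) (hP₂ : P₂.PosDef) (hS : S.PosDef) (hv : v ≠ 0) :
    InjOn (fusedVec P₁ P₂ S v) (Icc 0 1) := by
  intro ω hω ω' hω' hu
  have hr : residual P₁ P₂ S v ω = residual P₁ P₂ S v ω' := by rw [residual, residual, hu]
  have h : (ω - ω') • weightDeriv P₁ P₂ *ᵥ residual P₁ P₂ S v ω = 0 := by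
    rw [← smul_mulVec, ← weight_sub_weight, sub_mulVec,
      ← fusedVec_eq_weight_mulVec_residual v hP₁ hP₂ hS hω, hr,
      ← fusedVec_eq_weight_mulVec_residual v hP₁ hP₂ hS hω', hu, sub_self]
  rcases smul_eq_zero.mp h with h | h
  · exact sub_eq_zero.mp h
  · exact absurd h (weightDeriv_mulVec_ne_zero hP₁ hP₂ (residual_ne_zero v hP₁ hP₂ hS hω hv))

theorem dotProduct_fusedVec_sub_dotProduct_fusedVec (hP₁ : P₁.PosDef) (hP₂ : P₂.PosDef)
    (hS : S.PosDef) {ω ω' : ℝ} (hω : ω ∈ Icc (0 : ℝ) 1) (hω' : ω' ∈ Icc (0 : ℝ) 1) :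
    v ⬝ᵥ fusedVec P₁ P₂ S v ω - v ⬝ᵥ fusedVec P₁ P₂ S v ω' =
      (ω - ω') * (residual P₁ P₂ S v ω ⬝ᵥ weightDeriv P₁ P₂ *ᵥ residual P₁ P₂ S v ω') := by
  set u' := fusedVec P₁ P₂ S v ω'
  have hT : (1 + weight P₁ P₂ ω * S) *ᵥ (fusedVec P₁ P₂ S v ω - u') =
      (ω - ω') • weightDeriv P₁ P₂ *ᵥ residual P₁ P₂ S v ω' :=
    calc _ = weight P₁ P₂ ω *ᵥ v - (u' + weight P₁ P₂ ω *ᵥ (S *ᵥ u')) := by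
          rw [mulVec_sub, one_add_weight_mul_mulVec_fusedVec v hP₁ hP₂ hS hω, add_mulVec,
            one_mulVec, mulVec_mulVec]
      _ = weight P₁ P₂ ω *ᵥ residual P₁ P₂ S v ω' -
            weight P₁ P₂ ω' *ᵥ residual P₁ P₂ S v ω' := by
          rw [← fusedVec_eq_weight_mulVec_residual v hP₁ hP₂ hS hω', residual, mulVec_sub]
          abel
      _ = _ := by rw [← sub_mulVec, weight_sub_weight, smul_mulVec]
  calc _ = residual P₁ P₂ S v ω ᵥ* (1 + weight P₁ P₂ ω * S) ⬝ᵥ (fusedVec P₁ P₂ S v ω - u') := by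
        rw [residual_vecMul_one_add_weight_mul v hP₁ hP₂ hS hω, dotProduct_sub]
    _ = _ := by rw [← dotProduct_mulVec, hT, dotProduct_smul, smul_eq_mul]

theorem continuousAt_residual (hP₁ : P₁.PosDef) (hP₂ : P₂.PosDef) (hS : S.PosDef) {ω : ℝ}
    (hω : ω ∈ Icc (0 : ℝ) 1) : ContinuousAt (residual P₁ P₂ S v) ω := by
  have hW : Continuous (weight P₁ P₂) := by
    unfold weight
    fun_prop
  have hdet : (1 + weight P₁ P₂ ω * S).det ≠ 0 :=
    ((isUnit_iff_isUnit_det _).mp (isUnit_one_add_weight_mul hP₁ hP₂ hS hω)).ne_zero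
  have hinv : ContinuousAt (fun ω => (1 + weight P₁ P₂ ω * S)⁻¹) ω :=
    (continuousAt_matrix_inv _ (by rw [Ring.inverse_eq_inv']; exact continuousAt_inv₀ hdet)).comp
      (by fun_prop)
  unfold residual fusedVec
  fun_prop

theorem hasDerivWithinAt_dotProduct_fusedVec (hP₁ : P₁.PosDef) (hP₂ : P₂.PosDef)
    (hS : S.PosDef) {ω : ℝ} (hω : ω ∈ Icc (0 : ℝ) 1) :
    HasDerivWithinAt (fun ω => v ⬝ᵥ fusedVec P₁ P₂ S v ω) (fusedDeriv P₁ P₂ S v ω) (Icc 0 1) ω := by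
  rw [hasDerivWithinAt_iff_tendsto_slope]
  have hcont : ContinuousAt
      (fun ω' => residual P₁ P₂ S v ω' ⬝ᵥ weightDeriv P₁ P₂ *ᵥ residual P₁ P₂ S v ω) ω :=
    (continuous_id.dotProduct continuous_const).continuousAt.comp
      (continuousAt_residual v hP₁ hP₂ hS hω)
  refine (hcont.tendsto.mono_left nhdsWithin_le_nhds).congr' ?_
  filter_upwards [self_mem_nhdsWithin] with ω' ⟨hω', hne⟩
  rw [slope_def_field, dotProduct_fusedVec_sub_dotProduct_fusedVec v hP₁ hP₂ hS hω' hω,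
    mul_div_cancel_left₀ _ (sub_ne_zero.mpr hne)]

theorem fusedVec_dotProduct_mulVec_le (hP₁ : P₁.PosDef) (hP₂ : P₂.PosDef) (hS : S.PosDef)
    {ω : ℝ} (hω : ω ∈ Icc (0 : ℝ) 1) {Q : Matrix (n ⊕ n) (n ⊕ n) ℝ} (hQ : Q.PosSemidef)
    (hQ₁ : Q.toBlocks₁₁ = P₁) (hQ₂ : Q.toBlocks₂₂ = P₂) :
    fusedVec P₁ P₂ S v ω ⬝ᵥ Q *ᵥ fusedVec P₁ P₂ S v ω ≤
      fusedVec P₁ P₂ S v ω ⬝ᵥ residual P₁ P₂ S v ω := by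
  have hu := fusedVec_eq_sumElim v hP₁ hP₂ hS hω
  obtain ⟨r₁, r₂, hr⟩ : ∃ r₁ r₂, residual P₁ P₂ S v ω = Sum.elim r₁ r₂ :=
    ⟨_, _, (Sum.elim_comp_inl_inr _).symm⟩
  rw [hr, Sum.elim_comp_inl, Sum.elim_comp_inr] at hu
  set a := P₁⁻¹ *ᵥ r₁
  set b := P₂⁻¹ *ᵥ r₂
  have hsplit : Sum.elim (ω • a) ((1 - ω) • b) =
      ω • Sum.elim a (0 : n → ℝ) + (1 - ω) • Sum.elim (0 : n → ℝ) b := by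
    ext (i | i) <;> simp
  have hQa : Sum.elim a (0 : n → ℝ) ⬝ᵥ Q *ᵥ Sum.elim a (0 : n → ℝ) = a ⬝ᵥ r₁ := by
    rw [← fromBlocks_toBlocks Q, sumElim_dotProduct_fromBlocks_mulVec, hQ₁, hP₁.mulVec_inv_mulVec]
    simp
  have hQb : Sum.elim (0 : n → ℝ) b ⬝ᵥ Q *ᵥ Sum.elim (0 : n → ℝ) b = b ⬝ᵥ r₂ := by
    rw [← fromBlocks_toBlocks Q, sumElim_dotProduct_fromBlocks_mulVec, hQ₂, hP₂.mulVec_inv_mulVec]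
    simp
  have hconv := hQ.convexOn_dotProduct_mulVec_s9.2 (mem_univ (Sum.elim a (0 : n → ℝ)))
    (mem_univ (Sum.elim (0 : n → ℝ) b)) hω.1 (sub_nonneg.2 hω.2) (add_sub_cancel ω 1)
  simp only [smul_eq_mul, hQa, hQb, ← hsplit] at hconv
  rwa [hu, hr, sumElim_dotProduct_sumElim, smul_dotProduct, smul_dotProduct]

theorem dotProduct_fusedVec_add_le (hP₁ : P₁.PosDef) (hP₂ : P₂.PosDef) (hS : S.PosDef) {ω : ℝ}
    (hω : ω ∈ Icc (0 : ℝ) 1) {Q : Matrix (n ⊕ n) (n ⊕ n) ℝ} (hQ : Q.PosSemidef)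
    (hQ₁ : Q.toBlocks₁₁ = P₁) (hQ₂ : Q.toBlocks₂₂ = P₂) {z : n ⊕ n → ℝ}
    (hz : (Q + S) *ᵥ z = v) :
    v ⬝ᵥ fusedVec P₁ P₂ S v ω +
        (z - fusedVec P₁ P₂ S v ω) ⬝ᵥ (Q + S) *ᵥ (z - fusedVec P₁ P₂ S v ω) ≤ v ⬝ᵥ z := by
  set u := fusedVec P₁ P₂ S v ω
  have hQu := fusedVec_dotProduct_mulVec_le v hP₁ hP₂ hS hω hQ hQ₁ hQ₂
  have hzu : z ⬝ᵥ (Q + S) *ᵥ u = u ⬝ᵥ v := by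
    rw [(hQ.isSymm.add hS.posSemidef.isSymm).dotProduct_mulVec_comm, hz]
  have huu : u ⬝ᵥ (Q + S) *ᵥ u = u ⬝ᵥ Q *ᵥ u + u ⬝ᵥ S *ᵥ u := by
    rw [add_mulVec, dotProduct_add]
  rw [residual, dotProduct_sub] at hQu
  rw [mulVec_sub, dotProduct_sub, sub_dotProduct, sub_dotProduct, hz, hzu, huu,
    dotProduct_comm v u, dotProduct_comm v z]
  linarith

theorem exists_posSemidef_add_mulVec_fusedVec_eq (hP₁ : P₁.PosDef) (hP₂ : P₂.PosDef)
    (hS : S.PosDef) {ω : ℝ} (hω : ω ∈ Icc (0 : ℝ) 1) (hv : v ≠ 0)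
    (hstat : fusedDeriv P₁ P₂ S v ω = 0) :
    ∃ Q : Matrix (n ⊕ n) (n ⊕ n) ℝ, Q.PosSemidef ∧ Q.toBlocks₁₁ = P₁ ∧ Q.toBlocks₂₂ = P₂ ∧
      (Q + S) *ᵥ fusedVec P₁ P₂ S v ω = v := by
  have hu := fusedVec_eq_sumElim v hP₁ hP₂ hS hω
  have hr₀ := residual_ne_zero v hP₁ hP₂ hS hω hv
  obtain ⟨r₁, r₂, hr⟩ : ∃ r₁ r₂, residual P₁ P₂ S v ω = Sum.elim r₁ r₂ :=
    ⟨_, _, (Sum.elim_comp_inl_inr _).symm⟩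
  rw [hr, Sum.elim_comp_inl, Sum.elim_comp_inr] at hu
  rw [fusedDeriv, hr, weightDeriv, sumElim_dotProduct_fromBlocks_mulVec] at hstat
  rw [hr] at hr₀
  set γ := r₁ ⬝ᵥ P₁⁻¹ *ᵥ r₁ with hγ_def
  have hγ₂ : r₂ ⬝ᵥ P₂⁻¹ *ᵥ r₂ = γ := by
    simp only [zero_mulVec, dotProduct_zero, add_zero, zero_add, neg_mulVec,
      dotProduct_neg] at hstat
    linarith
  have hγ : 0 < γ := by
    by_cases h₁ : r₁ = 0
    · have h₂ : r₂ ≠ 0 := by rintro rfl; exact hr₀ (by rw [h₁, Sum.elim_zero_zero])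
      simpa [hγ₂] using hP₂.inv.dotProduct_mulVec_pos h₂
    · simpa using hP₁.inv.dotProduct_mulVec_pos h₁
  refine ⟨fromBlocks P₁ (γ⁻¹ • vecMulVec r₁ r₂) (γ⁻¹ • vecMulVec r₁ r₂)ᴴ P₂,
    posSemidef_fromBlocks_smul_vecMulVec hP₁ hP₂ hγ le_rfl hγ₂.le, toBlocks_fromBlocks₁₁ ..,
    toBlocks_fromBlocks₂₂ .., ?_⟩
  have hQu : fromBlocks P₁ (γ⁻¹ • vecMulVec r₁ r₂) (γ⁻¹ • vecMulVec r₁ r₂)ᴴ P₂ *ᵥ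
      fusedVec P₁ P₂ S v ω = Sum.elim r₁ r₂ := by
    rw [hu, fromBlocks_mulVec]
    simp only [Sum.elim_comp_inl, Sum.elim_comp_inr, conjTranspose_eq_transpose_of_trivial,
      transpose_smul, transpose_vecMulVec, smul_mulVec, vecMulVec_mulVec, op_smul_eq_smul,
      mulVec_smul, hP₁.mulVec_inv_mulVec, hP₂.mulVec_inv_mulVec, hγ₂, smul_smul]
    rw [← hγ_def, inv_mul_cancel₀ hγ.ne', mul_one, mul_one, ← add_smul, ← add_smul,
      add_sub_cancel, one_smul, one_smul]
  rw [add_mulVec, hQu, ← hr]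
  exact sub_add_cancel v _

theorem eq_of_fusedDeriv_eq_zero (hP₁ : P₁.PosDef) (hP₂ : P₂.PosDef) (hS : S.PosDef)
    (hv : v ≠ 0) {ω ω' : ℝ} (hω : ω ∈ Icc (0 : ℝ) 1) (hω' : ω' ∈ Icc (0 : ℝ) 1)
    (hstat : fusedDeriv P₁ P₂ S v ω = 0) (hstat' : fusedDeriv P₁ P₂ S v ω' = 0) : ω = ω' := by
  obtain ⟨Q, hQ, hQ₁, hQ₂, hQu⟩ :=
    exists_posSemidef_add_mulVec_fusedVec_eq v hP₁ hP₂ hS hω hv hstat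
  obtain ⟨Q', hQ', hQ'₁, hQ'₂, hQ'u⟩ :=
    exists_posSemidef_add_mulVec_fusedVec_eq v hP₁ hP₂ hS hω' hv hstat'
  have h := dotProduct_fusedVec_add_le v hP₁ hP₂ hS hω hQ' hQ'₁ hQ'₂ hQ'u
  have h' := dotProduct_fusedVec_add_le v hP₁ hP₂ hS hω' hQ hQ₁ hQ₂ hQu
  refine fusedVec_injOn v hP₁ hP₂ hS hv hω hω' (sub_eq_zero.mp ?_)
  by_contra hne
  have hpos := (PosDef.posSemidef_add hQ hS).dotProduct_mulVec_pos hne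
  have hnonneg := (PosDef.posSemidef_add hQ' hS).posSemidef.dotProduct_mulVec_nonneg
    (fusedVec P₁ P₂ S v ω' - fusedVec P₁ P₂ S v ω)
  rw [star_trivial] at hpos hnonneg
  linarith

theorem fusedVec_zero (hP₁ : P₁.PosDef) (hP₂ : P₂.PosDef) (hS : S.PosDef) :
    fusedVec P₁ P₂ S v 0 = Sum.elim (0 : n → ℝ) ((P₂ + S.toBlocks₂₂)⁻¹ *ᵥ (v ∘ Sum.inr)) := by
  have hu := fusedVec_eq_sumElim v hP₁ hP₂ hS ⟨le_rfl, zero_le_one⟩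
  have hu₁ : fusedVec P₁ P₂ S v 0 ∘ Sum.inl = 0 := by rw [hu, Sum.elim_comp_inl, zero_smul]
  have hu₂ : P₂ *ᵥ (fusedVec P₁ P₂ S v 0 ∘ Sum.inr) = residual P₁ P₂ S v 0 ∘ Sum.inr := by
    rw [hu, Sum.elim_comp_inr, sub_zero, one_smul, hP₂.mulVec_inv_mulVec]
  have hPS : (P₂ + S.toBlocks₂₂).PosDef :=
    hP₂.add_posSemidef (hS.submatrix Sum.inr_injective).posSemidef
  have key : (P₂ + S.toBlocks₂₂) *ᵥ (fusedVec P₁ P₂ S v 0 ∘ Sum.inr) = v ∘ Sum.inr := by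
    rw [add_mulVec, hu₂, ← zero_add (S.toBlocks₂₂ *ᵥ _), ← mulVec_zero S.toBlocks₂₁, ← hu₁,
      ← mulVec_comp_inr]
    exact sub_add_cancel _ _
  rw [← Sum.elim_comp_inl_inr (fusedVec P₁ P₂ S v 0), hu₁, ← key, hPS.inv_mulVec_mulVec]

theorem fusedVec_one (hP₁ : P₁.PosDef) (hP₂ : P₂.PosDef) (hS : S.PosDef) :
    fusedVec P₁ P₂ S v 1 = Sum.elim ((P₁ + S.toBlocks₁₁)⁻¹ *ᵥ (v ∘ Sum.inl)) (0 : n → ℝ) := by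
  have hu := fusedVec_eq_sumElim v hP₁ hP₂ hS ⟨zero_le_one, le_rfl⟩
  have hu₂ : fusedVec P₁ P₂ S v 1 ∘ Sum.inr = 0 := by
    rw [hu, Sum.elim_comp_inr, sub_self, zero_smul]
  have hu₁ : P₁ *ᵥ (fusedVec P₁ P₂ S v 1 ∘ Sum.inl) = residual P₁ P₂ S v 1 ∘ Sum.inl := by
    rw [hu, Sum.elim_comp_inl, one_smul, hP₁.mulVec_inv_mulVec]
  have hPS : (P₁ + S.toBlocks₁₁).PosDef :=
    hP₁.add_posSemidef (hS.submatrix Sum.inl_injective).posSemidef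
  have key : (P₁ + S.toBlocks₁₁) *ᵥ (fusedVec P₁ P₂ S v 1 ∘ Sum.inl) = v ∘ Sum.inl := by
    rw [add_mulVec, hu₁, ← add_zero (S.toBlocks₁₁ *ᵥ _), ← mulVec_zero S.toBlocks₁₂, ← hu₂,
      ← mulVec_comp_inl]
    exact sub_add_cancel _ _
  rw [← Sum.elim_comp_inl_inr (fusedVec P₁ P₂ S v 1), hu₂, ← key, hPS.inv_mulVec_mulVec]

theorem inv_mulVec_eq_fusedVec (hP₁ : P₁.PosDef) (hP₂ : P₂.PosDef) (hS : S.PosDef) {ω : ℝ}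
    (hω : ω ∈ Ioo (0 : ℝ) 1) :
    (fromBlocks (ω⁻¹ • P₁) 0 0 ((1 - ω)⁻¹ • P₂) + S)⁻¹ *ᵥ v = fusedVec P₁ P₂ S v ω := by
  have hω₀ : ω ≠ 0 := hω.1.ne'
  have hω₁ : 1 - ω ≠ 0 := (sub_pos.2 hω.2).ne'
  have hDW : fromBlocks (ω⁻¹ • P₁) 0 0 ((1 - ω)⁻¹ • P₂) * weight P₁ P₂ ω = 1 := by
    rw [weight, fromBlocks_multiply, ← fromBlocks_one]
    simp [smul_smul, mul_inv_cancel₀ hω₀, mul_inv_cancel₀ hω₁,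
      mul_nonsing_inv _ hP₁.det_pos.ne'.isUnit, mul_nonsing_inv _ hP₂.det_pos.ne'.isUnit]
  have hD : (fromBlocks (ω⁻¹ • P₁) 0 0 ((1 - ω)⁻¹ • P₂)).PosSemidef :=
    .fromBlocks_zero (hP₁.posSemidef.smul (inv_nonneg.2 hω.1.le))
      (hP₂.posSemidef.smul (inv_nonneg.2 (sub_pos.2 hω.2).le))
  have hBu : (fromBlocks (ω⁻¹ • P₁) 0 0 ((1 - ω)⁻¹ • P₂) + S) *ᵥ fusedVec P₁ P₂ S v ω = v := by
    rw [add_mulVec]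
    nth_rw 1 [fusedVec_eq_weight_mulVec_residual v hP₁ hP₂ hS (Ioo_subset_Icc_self hω)]
    rw [mulVec_mulVec, hDW, one_mulVec]
    exact sub_add_cancel _ _
  conv_lhs => rw [← hBu]
  exact (PosDef.posSemidef_add hD hS).inv_mulVec_mulVec _

end General

variable {d : ℕ} {P₁ P₂ : Matrix (Fin d) (Fin d) ℝ} {S : Matrix (Fin d ⊕ Fin d) (Fin d ⊕ Fin d) ℝ}

theorem Hmat_mulVec (x : Fin d → ℝ) : Hmat d *ᵥ x = Sum.elim x x := by
  rw [Hmat, fromRows_mulVec, one_mulVec]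

theorem dotProduct_Hmat_conj_mulVec (M : Matrix (Fin d ⊕ Fin d) (Fin d ⊕ Fin d) ℝ)
    (x : Fin d → ℝ) :
    x ⬝ᵥ ((Hmat d)ᵀ * M * Hmat d) *ᵥ x = Sum.elim x x ⬝ᵥ M *ᵥ Sum.elim x x := by
  rw [← mulVec_mulVec, ← mulVec_mulVec, dotProduct_transpose_mulVec, Hmat_mulVec, dotProduct_comm]

theorem hfun_eq_dotProduct_fusedVec (hP₁ : P₁.PosDef) (hP₂ : P₂.PosDef) (hS : S.PosDef)
    (x : Fin d → ℝ) {ω : ℝ} (hω : ω ∈ Icc (0 : ℝ) 1) :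
    hfun d P₁ P₂ S x ω = Sum.elim x x ⬝ᵥ fusedVec P₁ P₂ S (Sum.elim x x) ω := by
  rcases hω.1.eq_or_lt with rfl | h₀
  · rw [hfun, AF, if_pos rfl, fusedVec_zero _ hP₁ hP₂ hS, sumElim_dotProduct_sumElim,
      dotProduct_zero, zero_add, Sum.elim_comp_inr]
  rcases hω.2.eq_or_lt with rfl | h₁
  · rw [hfun, AF, if_neg one_ne_zero, if_pos rfl, fusedVec_one _ hP₁ hP₂ hS,
      sumElim_dotProduct_sumElim, dotProduct_zero, add_zero, Sum.elim_comp_inl]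
  rw [hfun, AF, if_neg h₀.ne', if_neg h₁.ne, dotProduct_Hmat_conj_mulVec, Bc,
    inv_mulVec_eq_fusedVec _ hP₁ hP₂ hS ⟨h₀, h₁⟩]

theorem fusedDeriv_eq_zero_of_hasDerivWithinAt (hP₁ : P₁.PosDef) (hP₂ : P₂.PosDef)
    (hS : S.PosDef) {x : Fin d → ℝ} {ω : ℝ} (hω : ω ∈ Icc (0 : ℝ) 1)
    (hder : HasDerivWithinAt (hfun d P₁ P₂ S x) 0 (Icc 0 1) ω) :
    fusedDeriv P₁ P₂ S (Sum.elim x x) ω = 0 :=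
  (uniqueDiffOn_Icc zero_lt_one ω hω).eq_deriv _
    ((hasDerivWithinAt_dotProduct_fusedVec _ hP₁ hP₂ hS hω).congr_of_mem
      (fun _ hω' => hfun_eq_dotProduct_fusedVec hP₁ hP₂ hS x hω') hω) hder

theorem hfun_le_of_mem_Adm (hP₁ : P₁.PosDef) (hP₂ : P₂.PosDef) (hS : S.PosDef)
    (x : Fin d → ℝ) {ω : ℝ} (hω : ω ∈ Icc (0 : ℝ) 1)
    {P : Matrix (Fin d ⊕ Fin d) (Fin d ⊕ Fin d) ℝ} (hP : P ∈ Adm d P₁ P₂ S) :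
    hfun d P₁ P₂ S x ω ≤ x ⬝ᵥ ((Hmat d)ᵀ * P⁻¹ * Hmat d) *ᵥ x := by
  obtain ⟨Q, hQ, hQ₁, hQ₂, rfl⟩ := hP
  have hQS := PosDef.posSemidef_add hQ hS
  have hle := dotProduct_fusedVec_add_le (Sum.elim x x) hP₁ hP₂ hS hω hQ hQ₁ hQ₂
    (hQS.mulVec_inv_mulVec _)
  have hnonneg := hQS.posSemidef.dotProduct_mulVec_nonneg
    ((Q + S)⁻¹ *ᵥ Sum.elim x x - fusedVec P₁ P₂ S (Sum.elim x x) ω)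
  rw [star_trivial] at hnonneg
  rw [hfun_eq_dotProduct_fusedVec hP₁ hP₂ hS x hω, dotProduct_Hmat_conj_mulVec]
  linarith

theorem exists_mem_Adm_eq_hfun (hP₁ : P₁.PosDef) (hP₂ : P₂.PosDef) (hS : S.PosDef)
    {x : Fin d → ℝ} (hv : Sum.elim x x ≠ 0) {ω : ℝ} (hω : ω ∈ Icc (0 : ℝ) 1)
    (hstat : fusedDeriv P₁ P₂ S (Sum.elim x x) ω = 0) :
    ∃ P ∈ Adm d P₁ P₂ S, x ⬝ᵥ ((Hmat d)ᵀ * P⁻¹ * Hmat d) *ᵥ x = hfun d P₁ P₂ S x ω := by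
  obtain ⟨Q, hQ, hQ₁, hQ₂, hQu⟩ :=
    exists_posSemidef_add_mulVec_fusedVec_eq _ hP₁ hP₂ hS hω hv hstat
  refine ⟨Q + S, ⟨Q, hQ, hQ₁, hQ₂, rfl⟩, ?_⟩
  rw [dotProduct_Hmat_conj_mulVec, hfun_eq_dotProduct_fusedVec hP₁ hP₂ hS x hω]
  congr 1
  conv_lhs => rw [← hQu]
  exact (PosDef.posSemidef_add hQ hS).inv_mulVec_mulVec _

end ESCI

open ESCI

theorem gfun_eq_hfun_of_deriv_zero_general (d : ℕ)
    (P₁ P₂ : Matrix (Fin d) (Fin d) ℝ) (hP₁ : P₁.PosDef) (hP₂ : P₂.PosDef)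
    (S : Matrix (Fin d ⊕ Fin d) (Fin d ⊕ Fin d) ℝ) (hS : S.PosDef)
    (x : Fin d → ℝ) (hx : x ≠ 0) (ω₀ : ℝ) (hω₀ : ω₀ ∈ Set.Icc (0 : ℝ) 1)
    (hder : HasDerivWithinAt (hfun d P₁ P₂ S x) 0 (Set.Icc (0 : ℝ) 1) ω₀) :
    (∀ ω ∈ Set.Icc (0 : ℝ) 1,
        HasDerivWithinAt (hfun d P₁ P₂ S x) 0 (Set.Icc (0 : ℝ) 1) ω → ω = ω₀) ∧
    gfun d P₁ P₂ S x = hfun d P₁ P₂ S x ω₀ ∧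
    ∃ P ∈ Adm d P₁ P₂ S,
      x ⬝ᵥ ((Hmat d)ᵀ * P⁻¹ * Hmat d) *ᵥ x = hfun d P₁ P₂ S x ω₀ := by
  have hv : Sum.elim x x ≠ 0 := fun h => hx (funext fun i => congrFun h (Sum.inl i))
  have hstat := fusedDeriv_eq_zero_of_hasDerivWithinAt hP₁ hP₂ hS hω₀ hder
  obtain ⟨P, hP, hPx⟩ := exists_mem_Adm_eq_hfun hP₁ hP₂ hS hv hω₀ hstat
  have : Nonempty (Adm d P₁ P₂ S) := ⟨⟨P, hP⟩⟩
  have hlow (P : Adm d P₁ P₂ S) := hfun_le_of_mem_Adm hP₁ hP₂ hS x hω₀ P.2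
  refine ⟨fun ω hω hderω => eq_of_fusedDeriv_eq_zero _ hP₁ hP₂ hS hv hω hω₀
      (fusedDeriv_eq_zero_of_hasDerivWithinAt hP₁ hP₂ hS hω hderω) hstat,
    le_antisymm ?_ (le_ciInf hlow), P, hP, hPx⟩
  exact (ciInf_le ⟨_, forall_mem_range.2 hlow⟩ ⟨P, hP⟩).trans_eq hPx

/-- if the derivative of `h_x` within `[0,1]` vanishes at `ω₀`, then
`ω₀` is the unique such point, `g(x) = h_x(ω₀)`, and the infimum defining `g(x)`
is attained at some `P* ∈ 𝒜`. -/
theorem gfun_eq_hfun_of_deriv_zero (d : ℕ) (hd : 1 ≤ d)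
    (P₁ P₂ : Matrix (Fin d) (Fin d) ℝ) (hP₁ : P₁.PosDef) (hP₂ : P₂.PosDef)
    (S : Matrix (Fin d ⊕ Fin d) (Fin d ⊕ Fin d) ℝ) (hS : S.PosDef)
    (x : Fin d → ℝ) (hx : x ≠ 0) (ω₀ : ℝ) (hω₀ : ω₀ ∈ Set.Icc (0 : ℝ) 1)
    (hder : HasDerivWithinAt (hfun d P₁ P₂ S x) 0 (Set.Icc (0 : ℝ) 1) ω₀) :
    (∀ ω ∈ Set.Icc (0 : ℝ) 1,
        HasDerivWithinAt (hfun d P₁ P₂ S x) 0 (Set.Icc (0 : ℝ) 1) ω → ω = ω₀) ∧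
    gfun d P₁ P₂ S x = hfun d P₁ P₂ S x ω₀ ∧
    ∃ P ∈ Adm d P₁ P₂ S,
      x ⬝ᵥ ((Hmat d)ᵀ * P⁻¹ * Hmat d) *ᵥ x = hfun d P₁ P₂ S x ω₀ :=
  gfun_eq_hfun_of_deriv_zero_general d P₁ P₂ hP₁ hP₂ S hS x hx ω₀ hω₀ hder
end
end

section
/- Let d ≥ 1, let A₀ and A be symmetric d×d real matrices, let z ∈ ℝᵈ satisfy A₀ z = A z, and let g : ℝᵈ → ℝ satisfy xᵀ A x ≤ g(x) for all x ∈ ℝᵈ. Let y ∈ ℝᵈ, η ∈ ℝ, and for λ ∈ ℝ set x(λ) = η z + λ y. If either (1) there exists λ ≠ 0 with g(x(λ)) = x(λ)ᵀ A₀ x(λ), or (2) g(x(λ)) − x(λ)ᵀ A₀ x(λ) = o(λ²) as λ → 0, then yᵀ (A₀ − A) y ≥ 0. -/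
/-!
Since `A₀ - A` is symmetric and kills `z`, the gap `xᵀ A₀ x - xᵀ A x` along the line
`x(λ) = η z + λ y` is exactly `λ² yᵀ (A₀ - A) y`. Together with `xᵀ A x ≤ g x` this bounds
`g(x(λ)) - x(λ)ᵀ A₀ x(λ)` from below by `-λ² yᵀ (A₀ - A) y`, which is incompatible with either
vanishing condition if `yᵀ (A₀ - A) y < 0`.
-/

open Matrix Topology Asymptotics Filter

section QuadraticForm

variable {n R : Type*} [Fintype n] [CommRing R]

theorem dotProduct_mulVec_add_smul_of_mulVec_eq_zero {M : Matrix n n R} (hM : M.IsSymm)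
    {z : n → R} (hz : M *ᵥ z = 0) (y : n → R) (η l : R) :
    (η • z + l • y) ⬝ᵥ M *ᵥ (η • z + l • y) = l ^ 2 * (y ⬝ᵥ M *ᵥ y) := by
  have hzy : z ⬝ᵥ M *ᵥ y = 0 := by
    rw [dotProduct_mulVec, ← mulVec_transpose, hM, hz, zero_dotProduct]
  simp only [mulVec_add, mulVec_smul, hz, smul_zero, zero_add, dotProduct_smul, add_dotProduct,
    smul_dotProduct, hzy, smul_eq_mul]
  ring

end QuadraticForm

theorem nonneg_of_neg_mul_sq_le_of_vanishing {f : ℝ → ℝ} {c : ℝ} (hf : ∀ l, -(c * l ^ 2) ≤ f l)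
    (hvanish : (∃ l : ℝ, l ≠ 0 ∧ f l = 0) ∨ f =o[𝓝[≠] (0 : ℝ)] fun l => l ^ 2) :
    0 ≤ c := by
  rcases hvanish with ⟨l, hl, hfl⟩ | ho
  · have hl2 : 0 < l ^ 2 := by positivity
    nlinarith [hf l]
  · have hquot : ∀ᶠ l in 𝓝[≠] (0 : ℝ), -c ≤ f l / l ^ 2 := by
      filter_upwards [self_mem_nhdsWithin] with l (hl : l ≠ 0)
      rw [le_div_iff₀ (by positivity)]
      linarith [hf l]
    linarith [ge_of_tendsto ho.tendsto_div_nhds_zero hquot]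

theorem tightness_key_lemma_general (d : ℕ)
    (A₀ A : Matrix (Fin d) (Fin d) ℝ) (hA₀ : A₀.IsSymm) (hA : A.IsSymm)
    (z : Fin d → ℝ) (hz : A₀ *ᵥ z = A *ᵥ z)
    (g : (Fin d → ℝ) → ℝ) (hg : ∀ x : Fin d → ℝ, x ⬝ᵥ A *ᵥ x ≤ g x)
    (y : Fin d → ℝ) (η : ℝ)
    (hcase :
      (∃ l : ℝ, l ≠ 0 ∧
        g (η • z + l • y) = (η • z + l • y) ⬝ᵥ A₀ *ᵥ (η • z + l • y)) ∨
      (fun l : ℝ =>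
          g (η • z + l • y) - (η • z + l • y) ⬝ᵥ A₀ *ᵥ (η • z + l • y))
        =o[𝓝[≠] (0 : ℝ)] fun l : ℝ => l ^ 2) :
    0 ≤ y ⬝ᵥ (A₀ - A) *ᵥ y := by
  have hsymm : (A₀ - A).IsSymm := hA₀.sub hA
  have hnull : (A₀ - A) *ᵥ z = 0 := by rw [sub_mulVec, hz, sub_self]
  refine nonneg_of_neg_mul_sq_le_of_vanishing
    (f := fun l => g (η • z + l • y) - (η • z + l • y) ⬝ᵥ A₀ *ᵥ (η • z + l • y)) (fun l => ?_) ?_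
  · have hform := dotProduct_mulVec_add_smul_of_mulVec_eq_zero hsymm hnull y η l
    rw [sub_mulVec, dotProduct_sub] at hform
    linarith [hg (η • z + l • y)]
  · simpa only [sub_eq_zero] using hcase

/-- the key lemma for the tightness proof.  If `A₀ z = A z`,
`xᵀ A x ≤ g(x)` for all `x`, and along the line `x(λ) = η z + λ y` either
`g(x(λ)) = x(λ)ᵀ A₀ x(λ)` for some `λ ≠ 0`, or
`g(x(λ)) − x(λ)ᵀ A₀ x(λ) = o(λ²)` as `λ → 0`, then `yᵀ (A₀ − A) y ≥ 0`. -/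
theorem tightness_key_lemma (d : ℕ) (hd : 1 ≤ d)
    (A₀ A : Matrix (Fin d) (Fin d) ℝ) (hA₀ : A₀.IsSymm) (hA : A.IsSymm)
    (z : Fin d → ℝ) (hz : A₀ *ᵥ z = A *ᵥ z)
    (g : (Fin d → ℝ) → ℝ) (hg : ∀ x : Fin d → ℝ, x ⬝ᵥ A *ᵥ x ≤ g x)
    (y : Fin d → ℝ) (η : ℝ)
    (hcase :
      (∃ l : ℝ, l ≠ 0 ∧
        g (η • z + l • y) = (η • z + l • y) ⬝ᵥ A₀ *ᵥ (η • z + l • y)) ∨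
      (fun l : ℝ =>
          g (η • z + l • y) - (η • z + l • y) ⬝ᵥ A₀ *ᵥ (η • z + l • y))
        =o[𝓝[≠] (0 : ℝ)] fun l : ℝ => l ^ 2) :
    0 ≤ y ⬝ᵥ (A₀ - A) *ᵥ y :=
  tightness_key_lemma_general d A₀ A hA₀ hA z hz g hg y η hcase
end

section
/- Let d ≥ 1, let P₁, P₂, R₁, R₂ be symmetric positive definite d×d real matrices, let ω ∈ (0,1), and let H ∈ ℝ^{2d×d} be the two stacked d×d identity blocks. Then Hᵀ (blockdiag(ω⁻¹ P₁ + R₁, (1−ω)⁻¹ P₂ + R₂))⁻¹ H = ω (P₁ + ω R₁)⁻¹ + (1−ω) (P₂ + (1−ω) R₂)⁻¹. In particular, the ESCI fused bound with block-diagonal known-component covariance blockdiag(R₁,R₂) coincides with the Split Covariance Intersection bound (Σᵢ ωᵢ (Pᵢ + ωᵢ Rᵢ)⁻¹)⁻¹ with ω₁ = ω, ω₂ = 1−ω. -/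
open Matrix

namespace Matrix

variable {m n R : Type*} [Fintype m] [Fintype n]

theorem fromRows_one_one_transpose_mul_fromBlocks_mul [DecidableEq n] [Semiring R]
    (A B C D : Matrix n n R) :
    (fromRows (1 : Matrix n n R) (1 : Matrix n n R))ᵀ * fromBlocks A B C D *
      fromRows (1 : Matrix n n R) (1 : Matrix n n R) = A + B + C + D := by
  rw [transpose_fromRows, transpose_one, fromCols_mul_fromBlocks, fromCols_mul_fromRows]
  simp only [Matrix.one_mul, Matrix.mul_one]
  abel

theorem inv_fromBlocks_zero_zero [DecidableEq m] [DecidableEq n] [CommRing R]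
    {A : Matrix m m R} {D : Matrix n n R} (hAD : IsUnit A ↔ IsUnit D) :
    (fromBlocks A 0 0 D)⁻¹ = fromBlocks A⁻¹ 0 0 D⁻¹ := by
  simpa using inv_fromBlocks_zero₁₂_of_isUnit_iff A 0 D hAD

theorem inv_inv_smul_add [DecidableEq n] [Field R] {c : R} (hc : c ≠ 0) {P Q : Matrix n n R}
    (h : IsUnit (P + c • Q)) : (c⁻¹ • P + Q)⁻¹ = c • (P + c • Q)⁻¹ := by
  have hfactor : c⁻¹ • P + Q = c⁻¹ • (P + c • Q) := by
    rw [smul_add, smul_smul, inv_mul_cancel₀ hc, one_smul]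
  rw [hfactor]
  exact inv_eq_left_inv <| by
    rw [smul_mul_smul_comm, mul_inv_cancel₀ hc, one_smul,
      nonsing_inv_mul _ ((isUnit_iff_isUnit_det _).mp h)]

end Matrix

theorem esci_blockdiag_eq_sci_general (d : ℕ)
    (P₁ P₂ R₁ R₂ : Matrix (Fin d) (Fin d) ℝ)
    (hP₁ : P₁.PosDef) (hP₂ : P₂.PosDef) (hR₁ : R₁.PosDef) (hR₂ : R₂.PosDef)
    (ω : ℝ) (hω : ω ∈ Set.Ioo (0 : ℝ) 1) :
    (Matrix.fromRows (1 : Matrix (Fin d) (Fin d) ℝ) (1 : Matrix (Fin d) (Fin d) ℝ))ᵀ *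
        (Matrix.fromBlocks (ω⁻¹ • P₁ + R₁) 0 0 ((1 - ω)⁻¹ • P₂ + R₂))⁻¹ *
        Matrix.fromRows (1 : Matrix (Fin d) (Fin d) ℝ) (1 : Matrix (Fin d) (Fin d) ℝ) =
      ω • (P₁ + ω • R₁)⁻¹ + (1 - ω) • (P₂ + (1 - ω) • R₂)⁻¹ ∧
    ((Matrix.fromRows (1 : Matrix (Fin d) (Fin d) ℝ) (1 : Matrix (Fin d) (Fin d) ℝ))ᵀ *
        (Matrix.fromBlocks (ω⁻¹ • P₁ + R₁) 0 0 ((1 - ω)⁻¹ • P₂ + R₂))⁻¹ *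
        Matrix.fromRows (1 : Matrix (Fin d) (Fin d) ℝ) (1 : Matrix (Fin d) (Fin d) ℝ))⁻¹ =
      (ω • (P₁ + ω • R₁)⁻¹ + (1 - ω) • (P₂ + (1 - ω) • R₂)⁻¹)⁻¹ := by
  obtain ⟨hω₀, hω₁⟩ := hω
  have hω₁' : 0 < 1 - ω := sub_pos.mpr hω₁
  have hA : (ω⁻¹ • P₁ + R₁).PosDef := (hP₁.smul (inv_pos.mpr hω₀)).add hR₁
  have hD : ((1 - ω)⁻¹ • P₂ + R₂).PosDef := (hP₂.smul (inv_pos.mpr hω₁')).add hR₂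
  have precision_eq :
      (fromRows (1 : Matrix (Fin d) (Fin d) ℝ) (1 : Matrix (Fin d) (Fin d) ℝ))ᵀ *
        (fromBlocks (ω⁻¹ • P₁ + R₁) 0 0 ((1 - ω)⁻¹ • P₂ + R₂))⁻¹ *
        fromRows (1 : Matrix (Fin d) (Fin d) ℝ) (1 : Matrix (Fin d) (Fin d) ℝ) =
      ω • (P₁ + ω • R₁)⁻¹ + (1 - ω) • (P₂ + (1 - ω) • R₂)⁻¹ := by
    rw [inv_fromBlocks_zero_zero (iff_of_true hA.isUnit hD.isUnit),
      fromRows_one_one_transpose_mul_fromBlocks_mul, add_zero, add_zero,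
      inv_inv_smul_add hω₀.ne' (hP₁.add (hR₁.smul hω₀)).isUnit,
      inv_inv_smul_add hω₁'.ne' (hP₂.add (hR₂.smul hω₁')).isUnit]
  exact ⟨precision_eq, congrArg Inv.inv precision_eq⟩

/-- with a block-diagonal known-component covariance
`blockdiag(R₁, R₂)`, the ESCI fused precision equals the SCI precision
`ω (P₁ + ω R₁)⁻¹ + (1−ω) (P₂ + (1−ω) R₂)⁻¹`, hence the ESCI fused bound equals
the SCI bound. -/
theorem esci_blockdiag_eq_sci (d : ℕ) (hd : 1 ≤ d)
    (P₁ P₂ R₁ R₂ : Matrix (Fin d) (Fin d) ℝ)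
    (hP₁ : P₁.PosDef) (hP₂ : P₂.PosDef) (hR₁ : R₁.PosDef) (hR₂ : R₂.PosDef)
    (ω : ℝ) (hω : ω ∈ Set.Ioo (0 : ℝ) 1) :
    (Matrix.fromRows (1 : Matrix (Fin d) (Fin d) ℝ) (1 : Matrix (Fin d) (Fin d) ℝ))ᵀ *
        (Matrix.fromBlocks (ω⁻¹ • P₁ + R₁) 0 0 ((1 - ω)⁻¹ • P₂ + R₂))⁻¹ *
        Matrix.fromRows (1 : Matrix (Fin d) (Fin d) ℝ) (1 : Matrix (Fin d) (Fin d) ℝ) =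
      ω • (P₁ + ω • R₁)⁻¹ + (1 - ω) • (P₂ + (1 - ω) • R₂)⁻¹ ∧
    ((Matrix.fromRows (1 : Matrix (Fin d) (Fin d) ℝ) (1 : Matrix (Fin d) (Fin d) ℝ))ᵀ *
        (Matrix.fromBlocks (ω⁻¹ • P₁ + R₁) 0 0 ((1 - ω)⁻¹ • P₂ + R₂))⁻¹ *
        Matrix.fromRows (1 : Matrix (Fin d) (Fin d) ℝ) (1 : Matrix (Fin d) (Fin d) ℝ))⁻¹ =
      (ω • (P₁ + ω • R₁)⁻¹ + (1 - ω) • (P₂ + (1 - ω) • R₂)⁻¹)⁻¹ :=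
  esci_blockdiag_eq_sci_general d P₁ P₂ R₁ R₂ hP₁ hP₂ hR₁ hR₂ ω hω
end

section
/- Let d, q, N ≥ 1, let ω ∈ ℝ^N with ωᵢ > 0 for all i, let P₁⁽¹⁾,…,P_N⁽¹⁾ and P₁⁽ⁱⁿᵈ⁾,…,P_N⁽ⁱⁿᵈ⁾ be positive semidefinite d×d real matrices such that P'ᵢ := Pᵢ⁽¹⁾ + ωᵢ Pᵢ⁽ⁱⁿᵈ⁾ is positive definite for every i, let Q be a symmetric positive definite q×q real matrix, let M₁,…,M_N ∈ ℝ^{d×q}, let M ∈ ℝ^{Nd×q} be the vertical stack of the Mᵢ, and let H = 1_N ⊗ I_d ∈ ℝ^{Nd×d}. Set D = blockdiag(ω₁⁻¹P₁⁽¹⁾ + P₁⁽ⁱⁿᵈ⁾, …, ω_N⁻¹P_N⁽¹⁾ + P_N⁽ⁱⁿᵈ⁾), S₀ = Σᵢ ωᵢ Mᵢᵀ (P'ᵢ)⁻¹ Mᵢ + Q⁻¹ and S₁ = Σᵢ ωᵢ (P'ᵢ)⁻¹ Mᵢ. Then Hᵀ (D + M Q Mᵀ)⁻¹ H = Σᵢ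 ωᵢ (P'ᵢ)⁻¹ − S₁ S₀⁻¹ S₁ᵀ. -/
/-!
`D` is block diagonal with blocks `ωᵢ⁻¹ P'ᵢ`, so `D⁻¹` is block diagonal with blocks `ωᵢ (P'ᵢ)⁻¹`.
The Woodbury identity gives
`(D + M Q Mᵀ)⁻¹ = D⁻¹ - D⁻¹ M (Q⁻¹ + Mᵀ D⁻¹ M)⁻¹ Mᵀ D⁻¹`, where the middle factor is invertible
because it is `Q⁻¹` plus a positive semidefinite matrix. Since `M` and `H` are vertical stacks of
blocks, each product `Xᵀ D⁻¹ Y` with `X, Y ∈ {M, H}` collapses to a sum over the blocks.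
-/

namespace Matrix

variable {ι m n p R : Type*}

/-- Mathlib's `blockDiagonal` indexes by `m × ι`; this is the same matrix indexed block-first. -/
def blockDiagonalFst [DecidableEq ι] [Zero R] (A : ι → Matrix m m R) :
    Matrix (ι × m) (ι × m) R :=
  (blockDiagonal A).submatrix (Equiv.prodComm ι m) (Equiv.prodComm ι m)

def stack (C : ι → Matrix m n R) : Matrix (ι × m) n R :=
  of fun x b => C x.1 x.2 b

theorem blockDiagonalFst_apply [DecidableEq ι] [Zero R] (A : ι → Matrix m m R) (x y : ι × m) :
    blockDiagonalFst A x y = if x.1 = y.1 then A x.1 x.2 y.2 else 0 := by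
  rcases x with ⟨i, k⟩
  rcases y with ⟨j, l⟩
  by_cases h : i = j <;> simp [blockDiagonalFst, blockDiagonal_apply, h]

theorem blockDiagonalFst_one [DecidableEq ι] [DecidableEq m] [Zero R] [One R] :
    blockDiagonalFst (1 : ι → Matrix m m R) = 1 := by
  rw [blockDiagonalFst, blockDiagonal_one, submatrix_one_equiv]

section Semiring

variable [NonUnitalSemiring R] [Fintype ι] [Fintype m]

theorem stack_transpose_mul_stack (C : ι → Matrix m n R) (G : ι → Matrix m p R) :
    (stack C)ᵀ * stack G = ∑ i, (C i)ᵀ * G i := by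
  ext a c
  simp [mul_apply, stack, Fintype.sum_prod_type, sum_apply]

variable [DecidableEq ι]

theorem blockDiagonalFst_mul_blockDiagonalFst (A B : ι → Matrix m m R) :
    blockDiagonalFst A * blockDiagonalFst B = blockDiagonalFst fun i => A i * B i := by
  rw [blockDiagonalFst, blockDiagonalFst, submatrix_mul_equiv, ← blockDiagonal_mul]
  rfl

theorem blockDiagonalFst_mul_stack (A : ι → Matrix m m R) (C : ι → Matrix m n R) :
    blockDiagonalFst A * stack C = stack fun i => A i * C i := by
  ext ⟨i, k⟩ b
  simp [mul_apply, blockDiagonalFst_apply, stack, Fintype.sum_prod_type]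

theorem stack_transpose_mul_blockDiagonalFst_mul_stack (A : ι → Matrix m m R)
    (C : ι → Matrix m n R) (G : ι → Matrix m p R) :
    (stack C)ᵀ * blockDiagonalFst A * stack G = ∑ i, (C i)ᵀ * A i * G i := by
  rw [Matrix.mul_assoc (stack C)ᵀ, blockDiagonalFst_mul_stack, stack_transpose_mul_stack]
  simp only [Matrix.mul_assoc]

end Semiring

section CommRing

variable [CommRing R] [Fintype ι] [DecidableEq ι] [Fintype m] [DecidableEq m]

theorem blockDiagonalFst_mul_blockDiagonalFst_inv {A : ι → Matrix m m R}
    (hA : ∀ i, IsUnit (A i)) :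
    blockDiagonalFst A * blockDiagonalFst (fun i => (A i)⁻¹) = 1 := by
  rw [blockDiagonalFst_mul_blockDiagonalFst, ← blockDiagonalFst_one]
  congr 1
  ext1 i
  exact mul_nonsing_inv _ ((isUnit_iff_isUnit_det _).mp (hA i))

theorem isUnit_blockDiagonalFst {A : ι → Matrix m m R} (hA : ∀ i, IsUnit (A i)) :
    IsUnit (blockDiagonalFst A) :=
  (isUnit_iff_isUnit_det _).mpr
    (isUnit_det_of_right_inverse (blockDiagonalFst_mul_blockDiagonalFst_inv hA))

theorem inv_blockDiagonalFst {A : ι → Matrix m m R} (hA : ∀ i, IsUnit (A i)) :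
    (blockDiagonalFst A)⁻¹ = blockDiagonalFst fun i => (A i)⁻¹ :=
  inv_eq_right_inv (blockDiagonalFst_mul_blockDiagonalFst_inv hA)

theorem stack_transpose_mul_inv_blockDiagonalFst_mul_stack {A : ι → Matrix m m R}
    (hA : ∀ i, IsUnit (A i)) (C : ι → Matrix m n R) (G : ι → Matrix m p R) :
    (stack C)ᵀ * (blockDiagonalFst A)⁻¹ * stack G = ∑ i, (C i)ᵀ * (A i)⁻¹ * G i := by
  rw [inv_blockDiagonalFst hA, stack_transpose_mul_blockDiagonalFst_mul_stack]

end CommRing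

theorem stack_transpose_mul_inv_mul_stack [Fintype ι] [DecidableEq ι] [Fintype m]
    [DecidableEq m] [Fintype n] [DecidableEq n] {A : ι → Matrix m m ℝ} (hA : ∀ i, (A i).PosDef)
    {Q : Matrix n n ℝ} (hQ : Q.PosDef) (C : ι → Matrix m n ℝ) (G : ι → Matrix m p ℝ) :
    (stack G)ᵀ * (blockDiagonalFst A + stack C * Q * (stack C)ᵀ)⁻¹ * stack G =
      ∑ i, (G i)ᵀ * (A i)⁻¹ * G i -
        (∑ i, (G i)ᵀ * (A i)⁻¹ * C i) * (∑ i, (C i)ᵀ * (A i)⁻¹ * C i + Q⁻¹)⁻¹ *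
          (∑ i, (G i)ᵀ * (A i)⁻¹ * C i)ᵀ := by
  have hAunit : ∀ i, IsUnit (A i) := fun i => (hA i).isUnit
  have hS : (∑ i, (C i)ᵀ * (A i)⁻¹ * C i + Q⁻¹).PosDef := by
    refine PosDef.posSemidef_add (posSemidef_sum _ fun i _ => ?_) hQ.inv
    simpa using (hA i).inv.posSemidef.conjTranspose_mul_mul_same (C i)
  have transpose_sum_eq :
      (∑ i, (G i)ᵀ * (A i)⁻¹ * C i)ᵀ = ∑ i, (C i)ᵀ * (A i)⁻¹ * G i := by
    have hsymm : ∀ i, ((A i)⁻¹)ᵀ = (A i)⁻¹ := fun i => (hA i).inv.isHermitian.eq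
    simp [transpose_sum, transpose_mul, hsymm, Matrix.mul_assoc]
  rw [add_mul_mul_inv_eq_sub _ _ _ _ (isUnit_blockDiagonalFst hAunit) hQ.isUnit (by
      rw [stack_transpose_mul_inv_blockDiagonalFst_mul_stack hAunit, add_comm]
      exact hS.isUnit),
    transpose_sum_eq, add_comm _ Q⁻¹,
    ← stack_transpose_mul_inv_blockDiagonalFst_mul_stack hAunit G G,
    ← stack_transpose_mul_inv_blockDiagonalFst_mul_stack hAunit G C,
    ← stack_transpose_mul_inv_blockDiagonalFst_mul_stack hAunit C G,
    ← stack_transpose_mul_inv_blockDiagonalFst_mul_stack hAunit C C]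
  simp only [Matrix.mul_sub, Matrix.sub_mul, Matrix.mul_assoc]

end Matrix

open Matrix

theorem esci_common_noise_formula_general (d q N : ℕ)
    (ω : Fin N → ℝ) (hω : ∀ i, 0 < ω i)
    (P1 Pind : Fin N → Matrix (Fin d) (Fin d) ℝ)
    (hP' : ∀ i, (P1 i + ω i • Pind i).PosDef)
    (Q : Matrix (Fin q) (Fin q) ℝ) (hQ : Q.PosDef)
    (Mi : Fin N → Matrix (Fin d) (Fin q) ℝ)
    (M : Matrix (Fin N × Fin d) (Fin q) ℝ) (hM : ∀ p b, M p b = Mi p.1 p.2 b)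
    (H : Matrix (Fin N × Fin d) (Fin d) ℝ)
    (hH : ∀ p k, H p k = if p.2 = k then (1 : ℝ) else 0)
    (D : Matrix (Fin N × Fin d) (Fin N × Fin d) ℝ)
    (hD : ∀ p r, D p r =
      if p.1 = r.1 then ((ω p.1)⁻¹ • P1 p.1 + Pind p.1) p.2 r.2 else 0) :
    Hᵀ * (D + M * Q * Mᵀ)⁻¹ * H =
      (∑ i, ω i • (P1 i + ω i • Pind i)⁻¹) -
        (∑ i, ω i • ((P1 i + ω i • Pind i)⁻¹ * Mi i)) *
          (∑ i, ω i • ((Mi i)ᵀ * (P1 i + ω i • Pind i)⁻¹ * Mi i) + Q⁻¹)⁻¹ *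
        (∑ i, ω i • ((P1 i + ω i • Pind i)⁻¹ * Mi i))ᵀ := by
  set P' := fun i => P1 i + ω i • Pind i
  have hD_eq : D = blockDiagonalFst fun i => (ω i)⁻¹ • P' i := by
    ext x y
    rw [hD, blockDiagonalFst_apply, smul_add, smul_smul, inv_mul_cancel₀ (hω x.1).ne', one_smul]
  have hM_eq : M = stack Mi := by
    ext x b
    exact hM x b
  have hH_eq : H = stack fun _ => 1 := by
    ext x k
    rw [hH]
    simp [stack, one_apply]
  have hblock : ∀ i, ((ω i)⁻¹ • P' i).PosDef := fun i => (hP' i).smul (inv_pos.2 (hω i))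
  have hblock_inv : ∀ i, ((ω i)⁻¹ • P' i)⁻¹ = ω i • (P' i)⁻¹ := fun i => by
    refine inv_eq_left_inv ?_
    rw [smul_mul_smul_comm, mul_inv_cancel₀ (hω i).ne', one_smul,
      nonsing_inv_mul _ ((isUnit_iff_isUnit_det _).mp (hP' i).isUnit)]
  rw [hD_eq, hM_eq, hH_eq, stack_transpose_mul_inv_mul_stack hblock hQ]
  simp only [transpose_one, hblock_inv, one_mul, mul_one, smul_mul, Matrix.mul_smul]
  rfl

/-- Woodbury-style simplification of the ESCI fused precision in
the presence of a common noise: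
`Hᵀ (D + M Q Mᵀ)⁻¹ H = Σᵢ ωᵢ (P'ᵢ)⁻¹ − S₁ S₀⁻¹ S₁ᵀ`. -/
theorem esci_common_noise_formula (d q N : ℕ) (hd : 1 ≤ d) (hq : 1 ≤ q) (hN : 1 ≤ N)
    (ω : Fin N → ℝ) (hω : ∀ i, 0 < ω i)
    (P1 Pind : Fin N → Matrix (Fin d) (Fin d) ℝ)
    (hP1 : ∀ i, (P1 i).PosSemidef) (hPind : ∀ i, (Pind i).PosSemidef)
    (hP' : ∀ i, (P1 i + ω i • Pind i).PosDef)
    (Q : Matrix (Fin q) (Fin q) ℝ) (hQ : Q.PosDef)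
    (Mi : Fin N → Matrix (Fin d) (Fin q) ℝ)
    (M : Matrix (Fin N × Fin d) (Fin q) ℝ) (hM : ∀ p b, M p b = Mi p.1 p.2 b)
    (H : Matrix (Fin N × Fin d) (Fin d) ℝ)
    (hH : ∀ p k, H p k = if p.2 = k then (1 : ℝ) else 0)
    (D : Matrix (Fin N × Fin d) (Fin N × Fin d) ℝ)
    (hD : ∀ p r, D p r =
      if p.1 = r.1 then ((ω p.1)⁻¹ • P1 p.1 + Pind p.1) p.2 r.2 else 0) :
    Hᵀ * (D + M * Q * Mᵀ)⁻¹ * H =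
      (∑ i, ω i • (P1 i + ω i • Pind i)⁻¹) -
        (∑ i, ω i • ((P1 i + ω i • Pind i)⁻¹ * Mi i)) *
          (∑ i, ω i • ((Mi i)ᵀ * (P1 i + ω i • Pind i)⁻¹ * Mi i) + Q⁻¹)⁻¹ *
        (∑ i, ω i • ((P1 i + ω i • Pind i)⁻¹ * Mi i))ᵀ :=
  esci_common_noise_formula_general d q N ω hω P1 Pind hP' Q hQ Mi M hM H hH D hD
end
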